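/- arXiv:0912.2772 — 5 statements merged into one kernel-verified Lean document; each statement's English description precedes it below -/
import Mathlib

section
/- Let A : X ⇉ X* be a maximal monotone linear relation. Then the following are equivalent: (i) A is Borwein–Wiersma decomposable; (ii) dom A ⊆ dom A*; (iii) A = A_+ + A∘, i.e. Ax = A_+x + A∘x (pointwise Minkowski sum) for every x ∈ X. -/
open Pointwise
open scoped Classical

noncomputable section

abbrev Dl (X : Type*) [NormedAddCommGroup X] [NormedSpace ℝ X] : Type _ :=
  StrongDual ℝ X

variable {X : Type*} [NormedAddCommGroup X] [NormedSpace ℝ X]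

/-- The graph of a set-valued operator. -/
def graphOf (A : X → Set (Dl X)) : Set (X × Dl X) := {p | p.2 ∈ A p.1}

/-- The domain of a set-valued operator. -/
def domOf (A : X → Set (Dl X)) : Set X := {x | (A x).Nonempty}

/-- Monotone set-valued operator. -/
def MonotoneOp (A : X → Set (Dl X)) : Prop :=
  ∀ ⦃x xs y ys⦄, xs ∈ A x → ys ∈ A y → 0 ≤ (xs - ys) (x - y)

/-- Maximal monotone set-valued operator. -/
def MaxMonotoneOp (A : X → Set (Dl X)) : Prop :=
  MonotoneOp A ∧ ∀ x xs, (∀ y ys, ys ∈ A y → 0 ≤ (xs - ys) (x - y)) → xs ∈ A x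

/-- `A` is a linear relation: its graph is a linear subspace of `X × X*`. -/
def IsLinearRelation (A : X → Set (Dl X)) : Prop :=
  (0 : Dl X) ∈ A 0 ∧
  (∀ x xs y ys, xs ∈ A x → ys ∈ A y → xs + ys ∈ A (x + y)) ∧
  (∀ (c : ℝ) x xs, xs ∈ A x → c • xs ∈ A (c • x))

/-- The adjoint of a linear relation. -/
def adjointRel (A : X → Set (Dl X)) : X → Set (Dl X) :=
  fun x => {xs | ∀ a as, as ∈ A a → xs a = as x}

/-- Skew linear relation. -/
def SkewOp (A : X → Set (Dl X)) : Prop := ∀ x xs, xs ∈ A x → xs x = 0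

/-- Symmetric linear relation: `gra A ⊆ gra A*`. -/
def SymOp (A : X → Set (Dl X)) : Prop := graphOf A ⊆ graphOf (adjointRel A)

/-- At most single-valued. -/
def AtMostSingleValued (A : X → Set (Dl X)) : Prop := ∀ x, (A x).Subsingleton

/-- The symmetric part `A₊ = ½A + ½A*` (pointwise). -/
def symPart (A : X → Set (Dl X)) : X → Set (Dl X) :=
  fun x => (2 : ℝ)⁻¹ • A x + (2 : ℝ)⁻¹ • adjointRel A x

/-- The skew part `A∘ = ½A − ½A*` (pointwise). -/
def skewPart (A : X → Set (Dl X)) : X → Set (Dl X) :=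
  fun x => (2 : ℝ)⁻¹ • A x - (2 : ℝ)⁻¹ • adjointRel A x

/-- Proper extended-real-valued function. -/
def ProperFun (f : X → EReal) : Prop := (∀ x, f x ≠ ⊥) ∧ ∃ x, f x ≠ ⊤

/-- Convex extended-real-valued function. -/
def ConvexFun (f : X → EReal) : Prop :=
  ∀ x y, ∀ a b : ℝ, 0 ≤ a → 0 ≤ b → a + b = 1 →
    f (a • x + b • y) ≤ (a : EReal) * f x + (b : EReal) * f y

/-- The subdifferential of an extended-real-valued function. -/
def subdiff (f : X → EReal) : X → Set (Dl X) :=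
  fun x => {xs | ∀ y, (xs (y - x) : EReal) + f x ≤ f y}

/-- Borwein–Wiersma decomposability. -/
def BWDecomposable (A : X → Set (Dl X)) : Prop :=
  ∃ (f : X → EReal) (S : X → Set (Dl X)),
    ProperFun f ∧ LowerSemicontinuous f ∧ ConvexFun f ∧
    IsLinearRelation S ∧ SkewOp S ∧ AtMostSingleValued S ∧
    ∀ x, A x = subdiff f x + S x

/-- The quadratic function `q_A` associated with a monotone linear relation:
`q_A x = ½⟨x, x*⟩` for any `x* ∈ Ax` (`+∞` if `Ax = ∅`). -/
def qA (A : X → Set (Dl X)) : X → EReal :=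
  fun x => sInf {v : EReal | ∃ xs ∈ A x, v = (((2 : ℝ)⁻¹ * xs x : ℝ) : EReal)}

/-- The lower semicontinuous hull: the largest lsc function majorized by `f`. -/
def lscHull (f : X → EReal) : X → EReal :=
  fun x => sSup {v : EReal | ∃ g : X → EReal,
    LowerSemicontinuous g ∧ (∀ y, g y ≤ f y) ∧ v = g x}

/-- The Fenchel conjugate. -/
def fenchel (f : X → EReal) : Dl X → EReal :=
  fun xs => ⨆ x, ((xs x : EReal) - f x)

/-- Indicator function (values in `(-∞, +∞]`). -/
def indFun (C : Set X) : X → EReal := fun x => if x ∈ C then 0 else ⊤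

/-- `S` is a single-valued linear selection of the set-valued operator `B`. -/
def IsLinearSelection (S B : X → Set (Dl X)) : Prop :=
  IsLinearRelation S ∧ AtMostSingleValued S ∧ domOf S = domOf B ∧ ∀ x, S x ⊆ B x

/-- Irreducible (acyclic) operator in the sense of Asplund. -/
def IrreducibleOp (A : X → Set (Dl X)) : Prop :=
  ∀ (f : X → EReal) (S : X → Set (Dl X)),
    ProperFun f → LowerSemicontinuous f → ConvexFun f → MonotoneOp S →
    (∀ x, A x = subdiff f x + S x) →
    ∃ p : Dl X, (⋃ x ∈ domOf A, subdiff f x) = {p}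

/-- Asplund decomposability. -/
def AsplundDecomposable (A : X → Set (Dl X)) : Prop :=
  ∃ (f : X → EReal) (S : X → Set (Dl X)),
    ProperFun f ∧ LowerSemicontinuous f ∧ ConvexFun f ∧
    IrreducibleOp S ∧ ∀ x, A x = subdiff f x + S x

/-- Reflexivity of a real normed space. -/
def ReflexiveReal (X : Type*) [NormedAddCommGroup X] [NormedSpace ℝ X] : Prop :=
  Function.Surjective (NormedSpace.inclusionInDoubleDual ℝ X)



/-! ### Auxiliary lemmas -/

section Aux

/-- Adding a real constant is an order isomorphism of `EReal`. -/
def erealAddIso (c : ℝ) : EReal ≃o EReal where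
  toFun x := x + (c : EReal)
  invFun x := x - (c : EReal)
  left_inv x := EReal.add_sub_cancel_right
  right_inv x := EReal.sub_add_cancel
  map_rel_iff' := by
    intro x y
    exact (EReal.addLECancellable_coe c).add_le_add_iff_right

lemma ereal_iSup_add_coe {ι : Sort*} (g : ι → EReal) (c : ℝ) [Nonempty ι] :
    (⨆ i, g i) + (c : EReal) = ⨆ i, (g i + (c : EReal)) :=
  (erealAddIso c).map_iSup g

/-- The value of a chain (anchored at `(0,0)`) evaluated at `x`. -/
def chainVal : List (X × Dl X) → X → ℝ
  | [], _ => 0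
  | p :: l, x => chainVal l p.1 + p.2 (x - p.1)

lemma chainVal_continuous (l : List (X × Dl X)) : Continuous (chainVal l) := by
  cases l with
  | nil => exact continuous_const
  | cons p l =>
      show Continuous fun x => chainVal l p.1 + p.2 (x - p.1)
      exact continuous_const.add (p.2.continuous.comp (continuous_id.sub continuous_const))

lemma chainVal_affine (l : List (X × Dl X)) (x y : X) (a b : ℝ) (hab : a + b = 1) :
    chainVal l (a • x + b • y) = a * chainVal l x + b * chainVal l y := by
  cases l with
  | nil => show (0:ℝ) = a * 0 + b * 0; ring
  | cons p l =>
      show chainVal l p.1 + p.2 (a • x + b • y - p.1)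
        = a * (chainVal l p.1 + p.2 (x - p.1)) + b * (chainVal l p.1 + p.2 (y - p.1))
      have h1 : p.2 (a • x + b • y - p.1) = a * p.2 x + b * p.2 y - p.2 p.1 := by
        rw [map_sub, map_add, map_smul, map_smul]; simp [smul_eq_mul]
      have h2 : p.2 (x - p.1) = p.2 x - p.2 p.1 := map_sub _ _ _
      have h3 : p.2 (y - p.1) = p.2 y - p.2 p.1 := map_sub _ _ _
      rw [h1, h2, h3]
      have hb : b = 1 - a := by linarith
      subst hb; ring

section Rockafellar

variable (B : X → Set (Dl X))

/-- Rockafellar's convex potential for a cyclically monotone operator. -/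
def rockaf : X → EReal :=
  fun x => ⨆ l : {l : List (X × Dl X) // ∀ p ∈ l, p.2 ∈ B p.1},
    ((chainVal l.1 x : ℝ) : EReal)

variable {B}

instance : Nonempty {l : List (X × Dl X) // ∀ p ∈ l, p.2 ∈ B p.1} :=
  ⟨⟨[], by simp⟩⟩

lemma chain_bound (hB0 : (0 : Dl X) ∈ B 0)
    (hmono : ∀ ⦃z w y v⦄, w ∈ B z → v ∈ B y → 0 ≤ (w - v) (z - y))
    (hsym : ∀ ⦃z w y v⦄, w ∈ B z → v ∈ B y → w y = v z) :
    ∀ (l : List (X × Dl X)), (∀ p ∈ l, p.2 ∈ B p.1) →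
      ∀ z w, w ∈ B z → chainVal l z ≤ w z / 2 := by
  intro l
  induction l with
  | nil =>
      intro _ z w hw
      have h := hmono hw hB0
      simp only [sub_zero, ContinuousLinearMap.sub_apply,
        ContinuousLinearMap.zero_apply] at h
      show (0:ℝ) ≤ w z / 2
      linarith
  | cons p l ih =>
      intro hl z w hw
      obtain ⟨y, v⟩ := p
      have hv : v ∈ B y := hl (y, v) (by simp)
      have hchain : ∀ q ∈ l, q.2 ∈ B q.1 := fun q hq => hl q (List.mem_cons_of_mem _ hq)
      have h1 : chainVal l y ≤ v y / 2 := ih hchain y v hv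
      have h2 := hmono hw hv
      have h3 : w y = v z := hsym hw hv
      simp only [ContinuousLinearMap.sub_apply, map_sub] at h2
      show chainVal l y + v (z - y) ≤ w z / 2
      rw [map_sub]
      linarith [h2, h1, h3]

lemma rockaf_nonneg (x : X) : (0 : EReal) ≤ rockaf B x := by
  have := le_iSup (fun l : {l : List (X × Dl X) // ∀ p ∈ l, p.2 ∈ B p.1} =>
    ((chainVal l.1 x : ℝ) : EReal)) ⟨[], by simp⟩
  simp [chainVal] at this
  exact this

lemma rockaf_ne_bot (x : X) : rockaf B x ≠ ⊥ :=
  fun h => by simpa [h] using rockaf_nonneg (B := B) x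

lemma rockaf_zero (hB0 : (0 : Dl X) ∈ B 0)
    (hmono : ∀ ⦃z w y v⦄, w ∈ B z → v ∈ B y → 0 ≤ (w - v) (z - y))
    (hsym : ∀ ⦃z w y v⦄, w ∈ B z → v ∈ B y → w y = v z) :
    rockaf B 0 = 0 := by
  refine le_antisymm (iSup_le fun l => ?_) (rockaf_nonneg 0)
  have h := chain_bound hB0 hmono hsym l.1 l.2 0 0 hB0
  simp only [ContinuousLinearMap.zero_apply, zero_div] at h
  exact_mod_cast EReal.coe_le_coe_iff.2 h

lemma rockaf_proper (hB0 : (0 : Dl X) ∈ B 0)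
    (hmono : ∀ ⦃z w y v⦄, w ∈ B z → v ∈ B y → 0 ≤ (w - v) (z - y))
    (hsym : ∀ ⦃z w y v⦄, w ∈ B z → v ∈ B y → w y = v z) :
    ProperFun (rockaf B) :=
  ⟨fun x => rockaf_ne_bot x, ⟨0, by rw [rockaf_zero hB0 hmono hsym]; simp⟩⟩

lemma rockaf_lsc : LowerSemicontinuous (rockaf B) :=
  lowerSemicontinuous_iSup fun l =>
    (continuous_coe_real_ereal.comp (chainVal_continuous l.1)).lowerSemicontinuous

lemma rockaf_convex : ConvexFun (rockaf B) := by
  intro x y a b ha hb hab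
  refine iSup_le fun l => ?_
  rw [chainVal_affine l.1 x y a b hab]
  have h1 : ((a * chainVal l.1 x + b * chainVal l.1 y : ℝ) : EReal)
      = (a : EReal) * ((chainVal l.1 x : ℝ) : EReal)
        + (b : EReal) * ((chainVal l.1 y : ℝ) : EReal) := by
    rw [EReal.coe_add, EReal.coe_mul, EReal.coe_mul]
  rw [h1]
  have hx : ((chainVal l.1 x : ℝ) : EReal) ≤ rockaf B x :=
    le_iSup (fun l' : {l' : List (X × Dl X) // ∀ p ∈ l', p.2 ∈ B p.1} =>
      ((chainVal l'.1 x : ℝ) : EReal)) l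
  have hy : ((chainVal l.1 y : ℝ) : EReal) ≤ rockaf B y :=
    le_iSup (fun l' : {l' : List (X × Dl X) // ∀ p ∈ l', p.2 ∈ B p.1} =>
      ((chainVal l'.1 y : ℝ) : EReal)) l
  exact add_le_add (mul_le_mul_of_nonneg_left hx (by exact_mod_cast ha))
    (mul_le_mul_of_nonneg_left hy (by exact_mod_cast hb))

lemma rockaf_mem_subdiff {y : X} {v : Dl X} (hv : v ∈ B y) :
    v ∈ subdiff (rockaf B) y := by
  intro z
  show ((v (z - y) : ℝ) : EReal) + rockaf B y ≤ rockaf B z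
  rw [add_comm, rockaf, ereal_iSup_add_coe]
  refine iSup_le fun l => ?_
  have hmem : ∀ p ∈ ((y, v) :: l.1), p.2 ∈ B p.1 := by
    intro p hp
    rcases List.mem_cons.1 hp with h | h
    · subst h; exact hv
    · exact l.2 p h
  have := le_iSup (fun l' : {l' : List (X × Dl X) // ∀ p ∈ l', p.2 ∈ B p.1} =>
    ((chainVal l'.1 z : ℝ) : EReal)) ⟨(y, v) :: l.1, hmem⟩
  have heq : chainVal ((y, v) :: l.1) z = chainVal l.1 y + v (z - y) := rfl
  rw [heq] at this
  calc ((chainVal l.1 y : ℝ) : EReal) + ((v (z - y) : ℝ) : EReal)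
      = ((chainVal l.1 y + v (z - y) : ℝ) : EReal) := by rw [EReal.coe_add]
    _ ≤ rockaf B z := this

end Rockafellar

end Aux

section Subdiff

lemma sum_range_cast (n : ℕ) : ∑ k ∈ Finset.range n, (k : ℝ) = n * (n - 1) / 2 := by
  induction n with
  | zero => simp
  | succ m ih =>
      rw [Finset.sum_range_succ, ih]
      push_cast
      ring

lemma subdiff_fin {f : X → EReal} (hp : ProperFun f) {x : X} {xs : Dl X}
    (h : xs ∈ subdiff f x) : f x ≠ ⊤ ∧ f x ≠ ⊥ := by
  refine ⟨?_, hp.1 x⟩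
  intro htop
  obtain ⟨z, hz⟩ := hp.2
  have := h z
  rw [htop] at this
  simp only [EReal.coe_add_top, top_le_iff] at this
  exact hz this

lemma subdiff_real {f : X → EReal} (hp : ProperFun f) {x : X} {xs : Dl X}
    (h : xs ∈ subdiff f x) (y : X) (hy1 : f y ≠ ⊤) :
    xs (y - x) + (f x).toReal ≤ (f y).toReal := by
  obtain ⟨hx1, hx2⟩ := subdiff_fin hp h
  have := h y
  rw [← EReal.coe_toReal hx1 hx2, ← EReal.coe_add] at this
  have h2 := EReal.toReal_le_toReal this (by exact_mod_cast EReal.coe_ne_bot _) hy1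
  rwa [EReal.toReal_coe] at h2

lemma subdiff_mono {f : X → EReal} (hp : ProperFun f) : MonotoneOp (subdiff f) := by
  intro x xs y ys hx hy
  have h1 := subdiff_real hp hx y (subdiff_fin hp hy).1
  have h2 := subdiff_real hp hy x (subdiff_fin hp hx).1
  rw [map_sub] at h1 h2
  simp only [ContinuousLinearMap.sub_apply, map_sub]
  linarith

/-- Increment formula for a convex function along a line with affine subgradients. -/
lemma incr {f : X → EReal} (hp : ProperFun f) (x a : X) (p q : Dl X)
    (h : ∀ r : ℝ, p + r • q ∈ subdiff f (x + r • a)) :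
    (f (x + a)).toReal - (f x).toReal = p a + q a / 2 := by
  set F : ℝ → ℝ := fun r => (f (x + r • a)).toReal with hF
  have hfin : ∀ r : ℝ, f (x + r • a) ≠ ⊤ := fun r => (subdiff_fin hp (h r)).1
  have key : ∀ s t : ℝ, (s - t) * (p a + t * q a) ≤ F s - F t := by
    intro s t
    have hsub := subdiff_real hp (h t) (x + s • a) (hfin s)
    have harg : (x + s • a) - (x + t • a) = (s - t) • a := by
      rw [sub_smul]; abel
    rw [harg] at hsub
    have happ : (p + t • q) ((s - t) • a) = (s - t) * (p a + t * q a) := by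
      simp only [map_smul, ContinuousLinearMap.add_apply, ContinuousLinearMap.smul_apply,
        smul_eq_mul]
    rw [happ] at hsub
    linarith
  set L := p a with hL
  set c := q a with hc
  set D := F 1 - F 0 with hD
  have low : ∀ n : ℕ, 0 < n → L + c * ((n : ℝ) - 1) / (2 * n) ≤ D := by
    intro n hn
    have hn' : (0 : ℝ) < n := by exact_mod_cast hn
    have tele : ∑ k ∈ Finset.range n, (F (((k : ℝ) + 1) / n) - F ((k : ℝ) / n)) = D := by
      have := Finset.sum_range_sub (fun k => F ((k : ℝ) / n)) n
      simp only [Nat.cast_add, Nat.cast_one] at this ⊢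
      rw [this, div_self (ne_of_gt hn'), Nat.cast_zero, zero_div]
    have hterm : ∀ k ∈ Finset.range n,
        (1 / (n : ℝ)) * (L + ((k : ℝ) / n) * c) ≤ F (((k : ℝ) + 1) / n) - F ((k : ℝ) / n) := by
      intro k _
      have hkey := key (((k : ℝ) + 1) / n) ((k : ℝ) / n)
      have he : ((k : ℝ) + 1) / n - (k : ℝ) / n = 1 / n := by field_simp; ring
      rw [he] at hkey
      linarith [hkey]
    have hsum := Finset.sum_le_sum hterm
    rw [tele] at hsum
    have hcomp : ∑ k ∈ Finset.range n, (1 / (n : ℝ)) * (L + ((k : ℝ) / n) * c)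
        = L + c * ((n : ℝ) - 1) / (2 * n) := by
      calc ∑ k ∈ Finset.range n, (1 / (n : ℝ)) * (L + ((k : ℝ) / n) * c)
          = ∑ k ∈ Finset.range n, (L / n + (k : ℝ) * (c / (n : ℝ) ^ 2)) :=
            Finset.sum_congr rfl (fun k _ => by field_simp)
        _ = (n : ℝ) * (L / n) + ((n : ℝ) * ((n : ℝ) - 1) / 2) * (c / (n : ℝ) ^ 2) := by
            rw [Finset.sum_add_distrib, Finset.sum_const, Finset.card_range,
              nsmul_eq_mul, ← Finset.sum_mul, sum_range_cast]
        _ = L + c * ((n : ℝ) - 1) / (2 * n) := by field_simp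
    linarith [hcomp ▸ hsum]
  have high : ∀ n : ℕ, 0 < n → D ≤ L + c * ((n : ℝ) + 1) / (2 * n) := by
    intro n hn
    have hn' : (0 : ℝ) < n := by exact_mod_cast hn
    have tele : ∑ k ∈ Finset.range n, (F (((k : ℝ) + 1) / n) - F ((k : ℝ) / n)) = D := by
      have := Finset.sum_range_sub (fun k => F ((k : ℝ) / n)) n
      simp only [Nat.cast_add, Nat.cast_one] at this ⊢
      rw [this, div_self (ne_of_gt hn'), Nat.cast_zero, zero_div]
    have hterm : ∀ k ∈ Finset.range n,
        F (((k : ℝ) + 1) / n) - F ((k : ℝ) / n)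
          ≤ (1 / (n : ℝ)) * (L + (((k : ℝ) + 1) / n) * c) := by
      intro k _
      have hkey := key ((k : ℝ) / n) (((k : ℝ) + 1) / n)
      have he : (k : ℝ) / n - ((k : ℝ) + 1) / n = -(1 / n) := by field_simp; ring
      rw [he] at hkey
      linarith [hkey]
    have hsum := Finset.sum_le_sum hterm
    rw [tele] at hsum
    have hcomp : ∑ k ∈ Finset.range n, (1 / (n : ℝ)) * (L + (((k : ℝ) + 1) / n) * c)
        = L + c * ((n : ℝ) + 1) / (2 * n) := by
      calc ∑ k ∈ Finset.range n, (1 / (n : ℝ)) * (L + (((k : ℝ) + 1) / n) * c)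
          = ∑ k ∈ Finset.range n,
              ((L / n + c / (n : ℝ) ^ 2) + (k : ℝ) * (c / (n : ℝ) ^ 2)) :=
            Finset.sum_congr rfl (fun k _ => by field_simp; ring)
        _ = (n : ℝ) * (L / n + c / (n : ℝ) ^ 2)
              + ((n : ℝ) * ((n : ℝ) - 1) / 2) * (c / (n : ℝ) ^ 2) := by
            rw [Finset.sum_add_distrib, Finset.sum_const, Finset.card_range,
              nsmul_eq_mul, ← Finset.sum_mul, sum_range_cast]
        _ = L + c * ((n : ℝ) + 1) / (2 * n) := by field_simp; ring
    linarith [hcomp ▸ hsum]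
  have hc0 : 0 ≤ c := by
    have h1 := low 1 one_pos
    have h2 := high 1 one_pos
    norm_num at h1 h2
    linarith
  have habs : ∀ n : ℕ, 0 < n → |D - (L + c / 2)| ≤ c / (2 * n) := by
    intro n hn
    have hn' : (0 : ℝ) < n := by exact_mod_cast hn
    have e1 : c * ((n : ℝ) - 1) / (2 * n) = c / 2 - c / (2 * n) := by field_simp
    have e2 : c * ((n : ℝ) + 1) / (2 * n) = c / 2 + c / (2 * n) := by field_simp
    have h1 := low n hn
    have h2 := high n hn
    rw [e1] at h1; rw [e2] at h2
    rw [abs_le]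
    constructor <;> linarith
  have hE : D - (L + c / 2) = 0 := by
    by_contra hne
    have hEpos : 0 < |D - (L + c / 2)| := abs_pos.2 hne
    obtain ⟨n, hn⟩ := exists_nat_gt (c / (2 * |D - (L + c / 2)|))
    have hn0 : (0 : ℝ) < n := lt_of_le_of_lt (by positivity) hn
    have hnn : 0 < n := by exact_mod_cast hn0
    have := habs n hnn
    have hlt : c / (2 * (n : ℝ)) < |D - (L + c / 2)| := by
      rw [div_lt_iff₀ (by positivity)]
      have := (div_lt_iff₀ (by positivity : (0:ℝ) < 2 * |D - (L + c / 2)|)).1 hn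
      linarith [this]
    linarith
  have hfinal : D = L + c / 2 := by linarith [hE]
  have hx0 : x + (0 : ℝ) • a = x := by rw [zero_smul, add_zero]
  have hx1 : x + (1 : ℝ) • a = x + a := by rw [one_smul]
  calc (f (x + a)).toReal - (f x).toReal
      = F 1 - F 0 := by rw [hF]; simp only [hx0, hx1]
    _ = L + c / 2 := hfinal

lemma sym_of_families {f : X → EReal} (hp : ProperFun f) {x a : X} {u v : Dl X}
    (h1 : ∀ r : ℝ, u + r • v ∈ subdiff f (x + r • a))
    (h2 : ∀ r : ℝ, v + r • u ∈ subdiff f (a + r • x))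
    (h3 : ∀ r : ℝ, (r • u : Dl X) ∈ subdiff f (r • x))
    (h4 : ∀ r : ℝ, (r • v : Dl X) ∈ subdiff f (r • a)) : u a = v x := by
  have e1 := incr hp x a u v h1
  have e2 := incr hp a x v u h2
  have e3 := incr hp 0 x 0 u (by intro r; simpa using h3 r)
  have e4 := incr hp 0 a 0 v (by intro r; simpa using h4 r)
  simp only [zero_add, ContinuousLinearMap.zero_apply] at e3 e4
  rw [add_comm a x] at e2
  linarith

end Subdiff

section LinRel

variable {A : X → Set (Dl X)}

lemma adjoint_linear : IsLinearRelation (adjointRel A) := by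
  refine ⟨?_, ?_, ?_⟩
  · intro a as _
    simp
  · intro x xs y ys hx hy a as has
    simp only [ContinuousLinearMap.add_apply, hx a as has, hy a as has, map_add]
  · intro c x xs hx a as has
    simp only [ContinuousLinearMap.smul_apply, hx a as has, map_smul, smul_eq_mul]

lemma diff_mem_zero (hlin : IsLinearRelation A) {x : X} {u v : Dl X}
    (hu : u ∈ A x) (hv : v ∈ A x) : u - v ∈ A 0 := by
  have h := hlin.2.1 x u ((-1 : ℝ) • x) ((-1 : ℝ) • v) hu (hlin.2.2 (-1) x v hv)
  have h1 : x + (-1 : ℝ) • x = 0 := by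
    rw [neg_one_smul]; abel
  have h2 : u + (-1 : ℝ) • v = u - v := by
    rw [neg_one_smul ℝ v]; abel
  rwa [h1, h2] at h

/-- For a maximal monotone linear relation, `A0` is the annihilator of the domain. -/
lemma A0_ann (hlin : IsLinearRelation A) (hmax : MaxMonotoneOp A) :
    A 0 = {xs : Dl X | ∀ a as, as ∈ A a → xs a = 0} := by
  apply Set.Subset.antisymm
  · intro xs hxs a as has
    by_contra hne
    set s : ℝ := (as a + 1) / (xs a) with hs
    have hsx : s • xs ∈ A 0 := by
      have := hlin.2.2 s 0 xs hxs
      rwa [smul_zero] at this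
    have hmono := hmax.1 hsx has
    simp only [zero_sub, ContinuousLinearMap.sub_apply, ContinuousLinearMap.smul_apply,
      map_neg, smul_eq_mul] at hmono
    have hsa : s * xs a = as a + 1 := by
      rw [hs]; field_simp
    nlinarith [hmono, hsa]
  · intro xs hxs
    apply hmax.2
    intro y ys hys
    have h1 : 0 ≤ ys y := by
      have := hmax.1 hys hlin.1
      simpa using this
    have h2 : xs y = 0 := hxs y ys hys
    simp only [zero_sub, ContinuousLinearMap.sub_apply, map_neg]
    rw [h2]
    linarith

lemma mem_skewPart_iff {x : X} {s : Dl X} :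
    s ∈ skewPart A x ↔ ∃ u ∈ A x, ∃ v ∈ adjointRel A x,
      s = (2 : ℝ)⁻¹ • u - (2 : ℝ)⁻¹ • v := by
  constructor
  · rintro ⟨p, hp, q, hq, rfl⟩
    obtain ⟨u, hu, rfl⟩ := hp
    obtain ⟨v, hv, rfl⟩ := hq
    exact ⟨u, hu, v, hv, rfl⟩
  · rintro ⟨u, hu, v, hv, rfl⟩
    exact ⟨(2:ℝ)⁻¹ • u, ⟨u, hu, rfl⟩, (2:ℝ)⁻¹ • v, ⟨v, hv, rfl⟩, rfl⟩

lemma mem_symPart_iff {x : X} {s : Dl X} :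
    s ∈ symPart A x ↔ ∃ u ∈ A x, ∃ v ∈ adjointRel A x,
      s = (2 : ℝ)⁻¹ • u + (2 : ℝ)⁻¹ • v := by
  constructor
  · rintro ⟨p, hp, q, hq, rfl⟩
    obtain ⟨u, hu, rfl⟩ := hp
    obtain ⟨v, hv, rfl⟩ := hq
    exact ⟨u, hu, v, hv, rfl⟩
  · rintro ⟨u, hu, v, hv, rfl⟩
    exact ⟨(2:ℝ)⁻¹ • u, ⟨u, hu, rfl⟩, (2:ℝ)⁻¹ • v, ⟨v, hv, rfl⟩, rfl⟩

/-- The graph of the skew part, as a submodule of `X × X*`. -/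
def skewGraph (A : X → Set (Dl X)) (hlin : IsLinearRelation A) :
    Submodule ℝ (X × Dl X) where
  carrier := {p | p.2 ∈ skewPart A p.1}
  zero_mem' := by
    show (0 : Dl X) ∈ skewPart A 0
    rw [mem_skewPart_iff]
    exact ⟨0, hlin.1, 0, adjoint_linear.1, by simp⟩
  add_mem' := by
    rintro ⟨x₁, s₁⟩ ⟨x₂, s₂⟩ h1 h2
    obtain ⟨u₁, hu₁, v₁, hv₁, rfl⟩ := mem_skewPart_iff.1 h1
    obtain ⟨u₂, hu₂, v₂, hv₂, rfl⟩ := mem_skewPart_iff.1 h2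
    show _ ∈ skewPart A (x₁ + x₂)
    rw [mem_skewPart_iff]
    refine ⟨u₁ + u₂, hlin.2.1 _ _ _ _ hu₁ hu₂,
      v₁ + v₂, adjoint_linear.2.1 _ _ _ _ hv₁ hv₂, ?_⟩
    show ((2:ℝ)⁻¹ • u₁ - (2:ℝ)⁻¹ • v₁) + ((2:ℝ)⁻¹ • u₂ - (2:ℝ)⁻¹ • v₂)
      = (2:ℝ)⁻¹ • (u₁ + u₂) - (2:ℝ)⁻¹ • (v₁ + v₂)
    rw [smul_add, smul_add]
    abel
  smul_mem' := by
    rintro c ⟨x, s⟩ h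
    obtain ⟨u, hu, v, hv, rfl⟩ := mem_skewPart_iff.1 h
    show _ ∈ skewPart A (c • x)
    rw [mem_skewPart_iff]
    refine ⟨c • u, hlin.2.2 c x u hu, c • v, adjoint_linear.2.2 c x v hv, ?_⟩
    show c • ((2:ℝ)⁻¹ • u - (2:ℝ)⁻¹ • v) = (2:ℝ)⁻¹ • (c • u) - (2:ℝ)⁻¹ • (c • v)
    rw [smul_sub, smul_comm c, smul_comm c]

lemma exists_selection (hlin : IsLinearRelation A) (hmax : MaxMonotoneOp A)
    (hdom : domOf A ⊆ domOf (adjointRel A)) :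
    ∃ S : X → Set (Dl X), IsLinearRelation S ∧ AtMostSingleValued S ∧
      (∀ x, S x ⊆ skewPart A x) ∧ (∀ x, x ∈ domOf A → (S x).Nonempty) := by
  classical
  set G := skewGraph A hlin with hG
  set N : Submodule ℝ G := LinearMap.ker ((LinearMap.fst ℝ X (Dl X)).comp G.subtype) with hN
  obtain ⟨H', hcompl⟩ := Submodule.exists_isCompl (K := ℝ) (V := G) N
  set H : Submodule ℝ (X × Dl X) := H'.map G.subtype with hH
  refine ⟨fun x => {s | (x, s) ∈ H}, ⟨?_, ?_, ?_⟩, ?_, ?_, ?_⟩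
  · show ((0 : X), (0 : Dl X)) ∈ H
    exact H.zero_mem
  · intro x xs y ys hx hy
    exact H.add_mem hx hy
  · intro c x xs hx
    exact H.smul_mem c hx
  · -- single-valued
    intro x s₁ h1 s₂ h2
    have hd : ((0 : X), s₁ - s₂) ∈ H := by
      have := H.sub_mem h1 h2
      simpa using this
    obtain ⟨g, hg, hge⟩ := hd
    have hgN : g ∈ N := by
      rw [hN, LinearMap.mem_ker]
      exact congrArg Prod.fst hge
    have : g = 0 := by
      have := hcompl.inf_eq_bot
      have hmem : g ∈ N ⊓ H' := ⟨hgN, hg⟩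
      rw [this] at hmem
      exact hmem
    rw [this] at hge
    have hz : s₁ - s₂ = 0 := by
      have := congrArg Prod.snd hge
      simpa using this.symm
    exact sub_eq_zero.1 hz
  · -- S x ⊆ skewPart A x
    intro x s hs
    obtain ⟨g, _, hge⟩ := hs
    have h2 : ((g : X × Dl X)).2 ∈ skewPart A ((g : X × Dl X)).1 := g.2
    rw [show (g : X × Dl X) = (x, s) from hge] at h2
    exact h2
  · -- nonempty on dom A
    intro x hx
    obtain ⟨u, hu⟩ := hx
    obtain ⟨v, hv⟩ := hdom ⟨u, hu⟩
    have hgmem : ((x, (2:ℝ)⁻¹ • u - (2:ℝ)⁻¹ • v) : X × Dl X) ∈ G := by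
      show _ ∈ skewPart A x
      rw [mem_skewPart_iff]
      exact ⟨u, hu, v, hv, rfl⟩
    set g : G := ⟨(x, (2:ℝ)⁻¹ • u - (2:ℝ)⁻¹ • v), hgmem⟩ with hg
    have : g ∈ N ⊔ H' := by rw [hcompl.sup_eq_top]; trivial
    obtain ⟨n, hn, h, hh, hnh⟩ := Submodule.mem_sup.1 this
    refine ⟨(h : X × Dl X).2, ?_⟩
    show ((x, (h : X × Dl X).2) : X × Dl X) ∈ H
    have hn1 : (n : X × Dl X).1 = 0 := hn
    have hfst : (h : X × Dl X).1 = x := by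
      have := congrArg (fun g : G => (g : X × Dl X).1) hnh
      simp only [Submodule.coe_add, Prod.fst_add, hn1, zero_add] at this
      exact this
    have : ((h : X × Dl X).1, (h : X × Dl X).2) = (h : X × Dl X) := rfl
    rw [← hfst]
    exact ⟨h, hh, rfl⟩

end LinRel

section Main

variable {A : X → Set (Dl X)}

lemma bw_to_dom (hlin : IsLinearRelation A) (hbw : BWDecomposable A) :
    domOf A ⊆ domOf (adjointRel A) := by
  obtain ⟨f, S, hfp, _, _, hSlin, hSskew, hSsv, heq⟩ := hbw
  intro x hx
  obtain ⟨xs, hxs⟩ := hx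
  have hxs' := hxs
  rw [heq x] at hxs'
  obtain ⟨u, hu, s, hs, husx⟩ := Set.mem_add.1 hxs'
  refine ⟨u - s, ?_⟩
  intro a as has
  have has' := has
  rw [heq a] at has'
  obtain ⟨v, hv, t, ht, hvta⟩ := Set.mem_add.1 has'
  have hxsA : u + s ∈ A x := by rw [husx]; exact hxs
  have hasA : v + t ∈ A a := by rw [hvta]; exact has
  have extract : ∀ (z : X) (w tz : Dl X), w ∈ A z → tz ∈ S z → w - tz ∈ subdiff f z := by
    intro z w tz hw htz
    rw [heq z] at hw
    obtain ⟨w', hw', t', ht', he⟩ := Set.mem_add.1 hw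
    have htt : t' = tz := hSsv z ht' htz
    rw [htt] at he
    have hww : w' = w - tz := by rw [← he]; abel
    rw [← hww]
    exact hw'
  have fam1 : ∀ r : ℝ, u + r • v ∈ subdiff f (x + r • a) := by
    intro r
    have hA : (u + s) + r • (v + t) ∈ A (x + r • a) :=
      hlin.2.1 _ _ _ _ hxsA (hlin.2.2 r a _ hasA)
    have hS : s + r • t ∈ S (x + r • a) := hSlin.2.1 _ _ _ _ hs (hSlin.2.2 r a t ht)
    have hres := extract _ _ _ hA hS
    have he : (u + s) + r • (v + t) - (s + r • t) = u + r • v := by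
      rw [smul_add]; abel
    rwa [he] at hres
  have fam2 : ∀ r : ℝ, v + r • u ∈ subdiff f (a + r • x) := by
    intro r
    have hA : (v + t) + r • (u + s) ∈ A (a + r • x) :=
      hlin.2.1 _ _ _ _ hasA (hlin.2.2 r x _ hxsA)
    have hS : t + r • s ∈ S (a + r • x) := hSlin.2.1 _ _ _ _ ht (hSlin.2.2 r x s hs)
    have hres := extract _ _ _ hA hS
    have he : (v + t) + r • (u + s) - (t + r • s) = v + r • u := by
      rw [smul_add]; abel
    rwa [he] at hres
  have fam3 : ∀ r : ℝ, (r • u : Dl X) ∈ subdiff f (r • x) := by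
    intro r
    have hA : r • (u + s) ∈ A (r • x) := hlin.2.2 r x _ hxsA
    have hS : r • s ∈ S (r • x) := hSlin.2.2 r x s hs
    have hres := extract _ _ _ hA hS
    have he : r • (u + s) - r • s = r • u := by rw [smul_add]; abel
    rwa [he] at hres
  have fam4 : ∀ r : ℝ, (r • v : Dl X) ∈ subdiff f (r • a) := by
    intro r
    have hA : r • (v + t) ∈ A (r • a) := hlin.2.2 r a _ hasA
    have hS : r • t ∈ S (r • a) := hSlin.2.2 r a t ht
    have hres := extract _ _ _ hA hS
    have he : r • (v + t) - r • t = r • v := by rw [smul_add]; abel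
    rwa [he] at hres
  have hsym := sym_of_families hfp fam1 fam2 fam3 fam4
  have hst : s + t ∈ S (x + a) := hSlin.2.1 _ _ _ _ hs ht
  have h0 := hSskew _ _ hst
  have hsx := hSskew _ _ hs
  have hta := hSskew _ _ ht
  simp only [ContinuousLinearMap.add_apply, map_add] at h0
  have hax : as x = v x + t x := by
    rw [← hvta]; simp only [ContinuousLinearMap.add_apply]
  simp only [ContinuousLinearMap.sub_apply]
  rw [hax]
  linarith [hsym, h0, hsx, hta]

lemma dom_to_bw (hlin : IsLinearRelation A) (hmax : MaxMonotoneOp A)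
    (hdom : domOf A ⊆ domOf (adjointRel A)) : BWDecomposable A := by
  obtain ⟨S, hSlin, hSsv, hSsub, hSne⟩ := exists_selection hlin hmax hdom
  have hA0 := A0_ann hlin hmax
  have hSskew : SkewOp S := by
    intro z sz hsz
    obtain ⟨u, hu, v, hv, rfl⟩ := mem_skewPart_iff.1 (hSsub z hsz)
    have hvz := hv z u hu
    simp only [ContinuousLinearMap.sub_apply, ContinuousLinearMap.smul_apply, smul_eq_mul]
    rw [hvz]
    ring
  set B : X → Set (Dl X) := fun z => {w | ∃ uz ∈ A z, ∃ sz ∈ S z, w = uz - sz} with hB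
  have hB0 : (0 : Dl X) ∈ B 0 := ⟨0, hlin.1, 0, hSlin.1, by simp⟩
  have hBmono : ∀ ⦃z w y v⦄, w ∈ B z → v ∈ B y → 0 ≤ (w - v) (z - y) := by
    rintro z w y v ⟨u₁, hu₁, s₁, hs₁, rfl⟩ ⟨u₂, hu₂, s₂, hs₂, rfl⟩
    have hsS : s₁ - s₂ ∈ S (z - y) := by
      have h := hSlin.2.1 z s₁ ((-1:ℝ) • y) ((-1:ℝ) • s₂) hs₁ (hSlin.2.2 (-1) y s₂ hs₂)
      have h1 : z + (-1:ℝ) • y = z - y := by rw [neg_one_smul]; abel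
      have h2 : s₁ + (-1:ℝ) • s₂ = s₁ - s₂ := by rw [neg_one_smul ℝ s₂]; abel
      rwa [h1, h2] at h
    have hskew0 : (s₁ - s₂) (z - y) = 0 := hSskew _ _ hsS
    have hm := hmax.1 hu₁ hu₂
    have hexp : (u₁ - s₁ - (u₂ - s₂)) (z - y) = (u₁ - u₂) (z - y) - (s₁ - s₂) (z - y) := by
      simp only [ContinuousLinearMap.sub_apply]; ring
    show (0:ℝ) ≤ (u₁ - s₁ - (u₂ - s₂)) (z - y)
    rw [hexp, hskew0, sub_zero]
    exact hm
  have hBsym : ∀ ⦃z w y v⦄, w ∈ B z → v ∈ B y → w y = v z := by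
    rintro z w y v ⟨u₁, hu₁, s₁, hs₁, rfl⟩ ⟨u₂, hu₂, s₂, hs₂, rfl⟩
    obtain ⟨p₁, hp₁, q₁, hq₁, rfl⟩ := mem_skewPart_iff.1 (hSsub z hs₁)
    obtain ⟨p₂, hp₂, q₂, hq₂, rfl⟩ := mem_skewPart_iff.1 (hSsub y hs₂)
    have h1 : (u₁ - p₁) y = 0 := by
      have hm : u₁ - p₁ ∈ A 0 := diff_mem_zero hlin hu₁ hp₁
      rw [hA0] at hm
      exact hm y u₂ hu₂
    have h2 : (u₂ - p₂) z = 0 := by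
      have hm : u₂ - p₂ ∈ A 0 := diff_mem_zero hlin hu₂ hp₂
      rw [hA0] at hm
      exact hm z u₁ hu₁
    have h3 : q₁ y = u₂ z := hq₁ y u₂ hu₂
    have h4 : q₂ z = u₁ y := hq₂ z u₁ hu₁
    simp only [ContinuousLinearMap.sub_apply, ContinuousLinearMap.smul_apply,
      smul_eq_mul] at h1 h2 ⊢
    linarith [h1, h2, h3, h4]
  set f := rockaf B with hf
  have hfp : ProperFun f := rockaf_proper hB0 hBmono hBsym
  refine ⟨f, S, hfp, rockaf_lsc, rockaf_convex, hSlin, hSskew, hSsv, ?_⟩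
  have hsub : ∀ z, A z ⊆ subdiff f z + S z := by
    intro z w hw
    obtain ⟨sz, hsz⟩ := hSne z ⟨w, hw⟩
    refine Set.mem_add.2 ⟨w - sz, ?_, sz, hsz, by abel⟩
    exact rockaf_mem_subdiff ⟨w, hw, sz, hsz, rfl⟩
  intro z
  apply Set.Subset.antisymm (hsub z)
  intro w hw
  obtain ⟨u, hu, s, hs, huw⟩ := Set.mem_add.1 hw
  apply hmax.2
  intro y ys hys
  obtain ⟨u', hu', s', hs', hu's'⟩ := Set.mem_add.1 (hsub y hys)
  have hmono1 := subdiff_mono hfp hu hu'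
  have hsS : s - s' ∈ S (z - y) := by
    have h := hSlin.2.1 z s ((-1:ℝ) • y) ((-1:ℝ) • s') hs (hSlin.2.2 (-1) y s' hs')
    have h1 : z + (-1:ℝ) • y = z - y := by rw [neg_one_smul]; abel
    have h2 : s + (-1:ℝ) • s' = s - s' := by rw [neg_one_smul ℝ s']; abel
    rwa [h1, h2] at h
  have hskew0 : (s - s') (z - y) = 0 := hSskew _ _ hsS
  have hexp : (w - ys) (z - y) = (u - u') (z - y) + (s - s') (z - y) := by
    rw [← huw, ← hu's']
    simp only [ContinuousLinearMap.sub_apply, ContinuousLinearMap.add_apply]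
    ring
  rw [hexp, hskew0, add_zero]
  exact hmono1

lemma dom_to_sum (hlin : IsLinearRelation A) (hmax : MaxMonotoneOp A)
    (hdom : domOf A ⊆ domOf (adjointRel A)) :
    ∀ x, A x = symPart A x + skewPart A x := by
  have hA0 := A0_ann hlin hmax
  intro x
  by_cases hx : x ∈ domOf A
  · obtain ⟨u₀, hu₀⟩ := hx
    obtain ⟨v₀, hv₀⟩ := hdom ⟨u₀, hu₀⟩
    apply Set.Subset.antisymm
    · intro w hw
      refine Set.mem_add.2 ⟨(2:ℝ)⁻¹ • w + (2:ℝ)⁻¹ • v₀,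
        mem_symPart_iff.2 ⟨w, hw, v₀, hv₀, rfl⟩,
        (2:ℝ)⁻¹ • w - (2:ℝ)⁻¹ • v₀,
        mem_skewPart_iff.2 ⟨w, hw, v₀, hv₀, rfl⟩, ?_⟩
      have h2 : (2:ℝ)⁻¹ • w + (2:ℝ)⁻¹ • w = w := by
        rw [← add_smul]; norm_num
      calc ((2:ℝ)⁻¹ • w + (2:ℝ)⁻¹ • v₀) + ((2:ℝ)⁻¹ • w - (2:ℝ)⁻¹ • v₀)
          = (2:ℝ)⁻¹ • w + (2:ℝ)⁻¹ • w := by abel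
        _ = w := h2
    · intro w hw
      obtain ⟨pw, hpw, qw, hqw, hsum⟩ := Set.mem_add.1 hw
      obtain ⟨u₁, hu₁, v₁, hv₁, rfl⟩ := mem_symPart_iff.1 hpw
      obtain ⟨u₂, hu₂, v₂, hv₂, rfl⟩ := mem_skewPart_iff.1 hqw
      have hz1 : (2:ℝ)⁻¹ • (u₂ - u₁) ∈ A 0 := by
        have h := hlin.2.2 (2⁻¹) 0 _ (diff_mem_zero hlin hu₂ hu₁)
        rwa [smul_zero] at h
      have hz2 : (2:ℝ)⁻¹ • (v₁ - v₂) ∈ A 0 := by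
        rw [hA0]
        intro a as has
        have e1 : v₁ a = as x := hv₁ a as has
        have e2 : v₂ a = as x := hv₂ a as has
        simp only [ContinuousLinearMap.smul_apply, ContinuousLinearMap.sub_apply,
          smul_eq_mul]
        rw [e1, e2]; ring
      have hstep1 : u₁ + (2:ℝ)⁻¹ • (u₂ - u₁) ∈ A x := by
        have h := hlin.2.1 x u₁ 0 _ hu₁ hz1
        rwa [add_zero] at h
      have hstep2 : (u₁ + (2:ℝ)⁻¹ • (u₂ - u₁)) + (2:ℝ)⁻¹ • (v₁ - v₂) ∈ A x := by
        have h := hlin.2.1 x _ 0 _ hstep1 hz2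
        rwa [add_zero] at h
      have heqw : (u₁ + (2:ℝ)⁻¹ • (u₂ - u₁)) + (2:ℝ)⁻¹ • (v₁ - v₂) = w := by
        rw [← hsum]
        module
      rwa [heqw] at hstep2
  · have hempty : A x = ∅ := Set.not_nonempty_iff_eq_empty.1 hx
    rw [hempty]
    have hsym : symPart A x = ∅ := by
      show (2:ℝ)⁻¹ • A x + (2:ℝ)⁻¹ • adjointRel A x = ∅
      rw [hempty, Set.smul_set_empty, Set.empty_add]
    rw [hsym, Set.empty_add]

lemma sum_to_dom (h : ∀ x, A x = symPart A x + skewPart A x) :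
    domOf A ⊆ domOf (adjointRel A) := by
  rintro x ⟨xs, hxs⟩
  rw [h x] at hxs
  obtain ⟨p, hp, q, hq, _⟩ := Set.mem_add.1 hxs
  obtain ⟨u, hu, v, hv, rfl⟩ := mem_symPart_iff.1 hp
  exact ⟨v, hv⟩

end Main

/-- Theorem: characterization of Borwein–Wiersma decomposability.
Let `A : X ⇉ X*` be a maximal monotone linear relation.  Then the following are
equivalent: (i) `A` is Borwein–Wiersma decomposable; (ii) `dom A ⊆ dom A*`;
(iii) `A = A₊ + A∘` pointwise. -/
theorem bw_decomposability_characterization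
    [CompleteSpace X] (hrefl : ReflexiveReal X)
    (A : X → Set (Dl X)) (hlin : IsLinearRelation A) (hmax : MaxMonotoneOp A) :
    (BWDecomposable A ↔ domOf A ⊆ domOf (adjointRel A)) ∧
    (BWDecomposable A ↔ ∀ x, A x = symPart A x + skewPart A x) := by
  constructor
  · exact ⟨fun h => bw_to_dom hlin h, fun h => dom_to_bw hlin hmax h⟩
  · exact ⟨fun h => dom_to_sum hlin hmax (bw_to_dom hlin h),
      fun h => dom_to_bw hlin hmax (sum_to_dom h)⟩

end
end

section
/- Let A : X ⇉ X* be a maximal monotone linear relation. Then both A and A* are Borwein–Wiersma decomposable if and only if dom A = dom A*. -/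
open Pointwise
open scoped Classical

noncomputable section

variable {X : Type*} [NormedAddCommGroup X] [NormedSpace ℝ X]

section Basic

variable {X : Type*} [NormedAddCommGroup X] [NormedSpace ℝ X]

lemma adj_linrel (A : X → Set (Dl X)) : IsLinearRelation (adjointRel A) := by
  refine ⟨?_, ?_, ?_⟩
  · intro a as _
    simp
  · intro x xs y ys hx hy a as ha
    simp [ContinuousLinearMap.add_apply, hx a as ha, hy a as ha]
  · intro c x xs hx a as ha
    simp [ContinuousLinearMap.smul_apply, hx a as ha]

lemma linrel_sub {A : X → Set (Dl X)} (hA : IsLinearRelation A) {x : X} {u u' : Dl X}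
    (hu : u ∈ A x) (hu' : u' ∈ A x) : u - u' ∈ A 0 := by
  have h1 : (-1 : ℝ) • u' ∈ A ((-1 : ℝ) • x) := hA.2.2 (-1) x u' hu'
  have h2 := hA.2.1 x u _ _ hu h1
  convert h2 using 2
  · simp
  · ext y; simp [sub_eq_add_neg]

lemma linrel_add_zero {A : X → Set (Dl X)} (hA : IsLinearRelation A) {x : X} {u z : Dl X}
    (hu : u ∈ A x) (hz : z ∈ A 0) : u + z ∈ A x := by
  have := hA.2.1 x u 0 z hu hz
  simpa using this

lemma mono_self {A : X → Set (Dl X)} (hA : IsLinearRelation A) (hm : MonotoneOp A)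
    {x : X} {u : Dl X} (hu : u ∈ A x) : 0 ≤ u x := by
  have := hm hu hA.1
  simpa using this

lemma monoA0_perp {A : X → Set (Dl X)} (hA : IsLinearRelation A) (hm : MonotoneOp A)
    {z : Dl X} (hz : z ∈ A 0) {y : X} (hy : y ∈ domOf A) : z y = 0 := by
  obtain ⟨ys, hys⟩ := hy
  have H : ∀ c : ℝ, c * z y ≤ ys y := by
    intro c
    have hcz : c • z ∈ A 0 := by simpa using hA.2.2 c 0 z hz
    have := hm hys hcz
    simp only [ContinuousLinearMap.sub_apply, ContinuousLinearMap.smul_apply, sub_zero,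
      smul_eq_mul] at this
    linarith
  by_contra hne
  have := H ((ys y + 1) / (z y))
  rw [div_mul_cancel₀ _ hne] at this
  linarith

lemma perp_sub_A0 {A : X → Set (Dl X)} (hA : IsLinearRelation A) (hmax : MaxMonotoneOp A)
    {z : Dl X} (hz : ∀ y ∈ domOf A, z y = 0) : z ∈ A 0 := by
  apply hmax.2 0 z
  intro y ys hy
  have h1 : z y = 0 := hz y ⟨ys, hy⟩
  have h2 : 0 ≤ ys y := mono_self hA hmax.1 hy
  simp only [ContinuousLinearMap.sub_apply, zero_sub, map_neg, h1]
  simpa using h2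

lemma adj_zero_mem {A : X → Set (Dl X)} {xs : Dl X} :
    xs ∈ adjointRel A 0 ↔ ∀ y ∈ domOf A, xs y = 0 := by
  constructor
  · intro h y hy
    obtain ⟨ys, hys⟩ := hy
    have := h y ys hys
    simpa using this
  · intro h a as ha
    simp [h a ⟨as, ha⟩]

lemma adj_id {A : X → Set (Dl X)} {x a : X} {v as : Dl X}
    (hv : v ∈ adjointRel A x) (ha : as ∈ A a) : v a = as x := hv a as ha

end Basic
section OneVar

lemma onevar (g : ℝ → ℝ) (c d : ℝ)
    (h : ∀ s t : ℝ, g s + (t - s) * (c + d * s) ≤ g t) :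
    g 1 = g 0 + c + d / 2 := by
  have hd : 0 ≤ d := by
    have h1 := h 0 1
    have h2 := h 1 0
    nlinarith
  have key : ∀ n : ℕ, 0 < n → |g 1 - g 0 - (c + d / 2)| ≤ d / (2 * n) := by
    intro n hn
    have hn' : (0 : ℝ) < n := by exact_mod_cast hn
    have gauss : ∑ k ∈ Finset.range n, (k : ℝ) = n * (n - 1) / 2 := by
      induction n with
      | zero => simp
      | succ m ih =>
        rcases Nat.eq_zero_or_pos m with hm | hm
        · subst hm; simp
        · rw [Finset.sum_range_succ, ih hm (by exact_mod_cast hm)]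
          push_cast
          ring
    have tel : ∑ k ∈ Finset.range n, (g (((k : ℝ) + 1) / n) - g ((k : ℝ) / n)) = g 1 - g 0 := by
      have := Finset.sum_range_sub (fun k : ℕ => g ((k : ℝ) / n)) n
      have e1 : ∀ k : ℕ, g (((k : ℕ) + 1 : ℕ) / (n : ℝ)) = g (((k : ℝ) + 1) / n) := by
        intro k; norm_num
      calc ∑ k ∈ Finset.range n, (g (((k : ℝ) + 1) / n) - g ((k : ℝ) / n))
          = ∑ k ∈ Finset.range n,
              ((fun k : ℕ => g ((k : ℝ) / n)) (k + 1) - (fun k : ℕ => g ((k : ℝ) / n)) k) := by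
            apply Finset.sum_congr rfl; intro k _; push_cast; ring_nf
        _ = g ((n : ℝ) / n) - g ((0 : ℕ) / (n : ℝ)) := by rw [this]
        _ = g 1 - g 0 := by rw [div_self hn'.ne']; norm_num
    have sumlow : ∑ k ∈ Finset.range n, ((1 / (n:ℝ)) * (c + d * ((k:ℝ) / n)))
        = c + d * ((n:ℝ) - 1) / (2 * n) := by
      calc ∑ k ∈ Finset.range n, ((1 / (n:ℝ)) * (c + d * ((k:ℝ) / n)))
          = ∑ k ∈ Finset.range n, (c / n + (d / ((n:ℝ) * n)) * (k : ℝ)) := by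
            apply Finset.sum_congr rfl; intro k _; field_simp
        _ = (n : ℝ) * (c / n) + (d / ((n:ℝ) * n)) * ((n:ℝ) * ((n:ℝ) - 1) / 2) := by
            rw [Finset.sum_add_distrib, Finset.sum_const, ← Finset.mul_sum, gauss]
            simp [nsmul_eq_mul]
        _ = c + d * ((n:ℝ) - 1) / (2 * n) := by field_simp
    have sumhigh : ∑ k ∈ Finset.range n, ((1 / (n:ℝ)) * (c + d * (((k:ℝ) + 1) / n)))
        = c + d * ((n:ℝ) + 1) / (2 * n) := by
      calc ∑ k ∈ Finset.range n, ((1 / (n:ℝ)) * (c + d * (((k:ℝ) + 1) / n)))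
          = ∑ k ∈ Finset.range n, ((c / n + d / ((n:ℝ) * n)) + (d / ((n:ℝ) * n)) * (k : ℝ)) := by
            apply Finset.sum_congr rfl; intro k _; field_simp; ring
        _ = (n : ℝ) * (c / n + d / ((n:ℝ) * n))
              + (d / ((n:ℝ) * n)) * ((n:ℝ) * ((n:ℝ) - 1) / 2) := by
            rw [Finset.sum_add_distrib, Finset.sum_const, ← Finset.mul_sum, gauss]
            simp [nsmul_eq_mul]
            ring
        _ = c + d * ((n:ℝ) + 1) / (2 * n) := by field_simp; ring
    have lower : c + d * ((n:ℝ) - 1) / (2 * n) ≤ g 1 - g 0 := by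
      rw [← sumlow, ← tel]
      apply Finset.sum_le_sum
      intro k _
      have hh := h ((k : ℝ) / n) (((k : ℝ) + 1) / n)
      have he : ((k : ℝ) + 1) / n - (k : ℝ) / n = 1 / n := by field_simp; ring
      rw [he] at hh
      linarith
    have upper : g 1 - g 0 ≤ c + d * ((n:ℝ) + 1) / (2 * n) := by
      rw [← sumhigh, ← tel]
      apply Finset.sum_le_sum
      intro k _
      have hh := h (((k : ℝ) + 1) / n) ((k : ℝ) / n)
      have he : (k : ℝ) / n - ((k : ℝ) + 1) / n = -(1 / n) := by field_simp; ring
      rw [he] at hh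
      linarith
    have e1 : c + d * ((n:ℝ) - 1) / (2 * n) = c + d / 2 - d / (2 * n) := by field_simp; ring
    have e2 : c + d * ((n:ℝ) + 1) / (2 * n) = c + d / 2 + d / (2 * n) := by field_simp; ring
    rw [e1] at lower; rw [e2] at upper
    rw [abs_le]
    constructor <;> linarith
  have hr : g 1 - g 0 - (c + d / 2) = 0 := by
    by_contra hrne
    have habs : 0 < |g 1 - g 0 - (c + d / 2)| := abs_pos.2 hrne
    obtain ⟨n, hngt⟩ := exists_nat_gt (d / (2 * |g 1 - g 0 - (c + d / 2)|))
    have hn0 : 0 < n := by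
      by_contra hzero
      push_neg at hzero
      interval_cases n
      have : 0 ≤ d / (2 * |g 1 - g 0 - (c + d / 2)|) := by positivity
      simpa using lt_of_le_of_lt this hngt
    have hk := key n hn0
    have hn' : (0 : ℝ) < n := by exact_mod_cast hn0
    have : d / (2 * (n : ℝ)) < |g 1 - g 0 - (c + d / 2)| := by
      rw [div_lt_iff₀ (by positivity)]
      rw [div_lt_iff₀ (by positivity)] at hngt
      linarith [hngt]
    linarith
  linarith

end OneVar
section Sym

variable {X : Type*} [NormedAddCommGroup X] [NormedSpace ℝ X]

lemma subdiff_real_s1 {f : X → EReal} (hp : ProperFun f) {z : X} {u : Dl X}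
    (hu : u ∈ subdiff f z) : f z = ((f z).toReal : EReal) := by
  have hbot : f z ≠ ⊥ := hp.1 z
  have htop : f z ≠ ⊤ := by
    intro htop
    obtain ⟨y₀, hy₀⟩ := hp.2
    have := hu y₀
    rw [htop] at this
    have he : ((u (y₀ - z) : ℝ) : EReal) + ⊤ = ⊤ := by
      exact EReal.add_top_of_ne_bot (EReal.coe_ne_bot _)
    rw [he] at this
    exact hy₀ (top_le_iff.1 this)
  exact (EReal.coe_toReal htop hbot).symm

lemma subdiff_sym (f : X → EReal) (hp : ProperFun f) (x y : X) (u w : Dl X)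
    (hST : ∀ s t : ℝ, s • u + t • w ∈ subdiff f (s • x + t • y)) : u y = w x := by
  set F : ℝ → ℝ → ℝ := fun s t => (f (s • x + t • y)).toReal with hF
  have hFr : ∀ s t : ℝ, f (s • x + t • y) = ((F s t : ℝ) : EReal) := by
    intro s t
    exact subdiff_real_s1 hp (hST s t)
  have hkey : ∀ s t s' t' : ℝ,
      F s t + ((s' - s) * (s * u x + t * w x) + (t' - t) * (s * u y + t * w y)) ≤ F s' t' := by
    intro s t s' t'
    have h1 := hST s t (s' • x + t' • y)
    rw [hFr s t, hFr s' t'] at h1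
    have he : (s • u + t • w) (s' • x + t' • y - (s • x + t • y))
        = (s' - s) * (s * u x + t * w x) + (t' - t) * (s * u y + t * w y) := by
      simp only [ContinuousLinearMap.add_apply, ContinuousLinearMap.smul_apply, map_sub,
        map_add, map_smul, smul_eq_mul]
      ring
    rw [he] at h1
    rw [← EReal.coe_add] at h1
    have := EReal.coe_le_coe_iff.1 h1
    linarith
  have e3 : F 1 0 = F 0 0 + 0 + u x / 2 := by
    apply onevar (fun t => F t 0) 0 (u x)
    intro s t
    have H := hkey s 0 t 0
    ring_nf at H ⊢
    linarith [H]
  have e4 : F 0 1 = F 0 0 + 0 + w y / 2 := by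
    apply onevar (fun t => F 0 t) 0 (w y)
    intro s t
    have H := hkey 0 s 0 t
    ring_nf at H ⊢
    linarith [H]
  have e1 : F 1 1 = F 1 0 + u y + w y / 2 := by
    apply onevar (fun t => F 1 t) (u y) (w y)
    intro s t
    have H := hkey 1 s 1 t
    ring_nf at H ⊢
    linarith [H]
  have e2 : F 1 1 = F 0 1 + w x + u x / 2 := by
    apply onevar (fun s => F s 1) (w x) (u x)
    intro s t
    have H := hkey s 1 t 1
    ring_nf at H ⊢
    linarith [H]
  linarith

end Sym
section DomSub

variable {X : Type*} [NormedAddCommGroup X] [NormedSpace ℝ X]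

lemma bw_dom_subset_adj {B : X → Set (Dl X)} (hlinB : IsLinearRelation B)
    (hBW : BWDecomposable B) : domOf B ⊆ domOf (adjointRel B) := by
  obtain ⟨f, S, hpf, _, _, hlinS, hskewS, hsv, hdec⟩ := hBW
  intro x hx
  obtain ⟨xstar, hxstar⟩ := hx
  have hx' : xstar ∈ subdiff f x + S x := by rw [← hdec]; exact hxstar
  obtain ⟨u, hu, σx, hσx, hsum⟩ := Set.mem_add.1 hx'
  refine ⟨u - σx, ?_⟩
  intro a as ha
  have ha' : as ∈ subdiff f a + S a := by rw [← hdec]; exact ha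
  obtain ⟨ua, hua, σa, hσa, hsuma⟩ := Set.mem_add.1 ha'
  have hskew_id : σx a + σa x = 0 := by
    have hmem : σx + σa ∈ S (x + a) := hlinS.2.1 _ _ _ _ hσx hσa
    have h0 := hskewS _ _ hmem
    have h1 := hskewS _ _ hσx
    have h2 := hskewS _ _ hσa
    simp only [ContinuousLinearMap.add_apply, map_add] at h0
    linarith
  have hsym : u a = ua x := by
    apply subdiff_sym f hpf x a u ua
    intro s t
    have hB1 : s • xstar ∈ B (s • x) := hlinB.2.2 s x xstar hxstar
    have hB2 : t • as ∈ B (t • a) := hlinB.2.2 t a as ha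
    have hB : s • xstar + t • as ∈ B (s • x + t • a) := hlinB.2.1 _ _ _ _ hB1 hB2
    have hS : s • σx + t • σa ∈ S (s • x + t • a) :=
      hlinS.2.1 _ _ _ _ (hlinS.2.2 s x σx hσx) (hlinS.2.2 t a σa hσa)
    have hB' : s • xstar + t • as ∈ subdiff f (s • x + t • a) + S (s • x + t • a) := by
      rw [← hdec]; exact hB
    obtain ⟨u', hu', σ', hσ', hsum'⟩ := Set.mem_add.1 hB'
    have hσeq : σ' = s • σx + t • σa := hsv _ hσ' hS
    have hA : u' + (s • σx + t • σa) = (s • u + t • ua) + (s • σx + t • σa) := by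
      rw [hσeq] at hsum'
      rw [hsum', ← hsum, ← hsuma]
      simp only [smul_add]
      abel
    have hueq : u' = s • u + t • ua := add_right_cancel hA
    rw [← hueq]
    exact hu'
  show (u - σx) a = as x
  have has : as x = ua x + σa x := by rw [← hsuma]; simp
  simp only [ContinuousLinearMap.sub_apply]
  rw [has, ← hsym]
  linarith

end DomSub
section Bidual

variable {X : Type*} [NormedAddCommGroup X] [NormedSpace ℝ X]

lemma maxmono_graph_closed {A : X → Set (Dl X)} (hmax : MaxMonotoneOp A) :
    IsClosed (graphOf A) := by
  have hset : graphOf A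
      = ⋂ (q : graphOf A), {p : X × Dl X | 0 ≤ (p.2 - q.1.2) (p.1 - q.1.1)} := by
    ext p
    simp only [Set.mem_iInter, Set.mem_setOf_eq]
    constructor
    · intro hp q
      exact hmax.1 hp q.2
    · intro hp
      exact hmax.2 p.1 p.2 (fun y ys hy => hp ⟨(y, ys), hy⟩)
  rw [hset]
  apply isClosed_iInter
  intro q
  have hc : Continuous fun p : X × Dl X => (p.2 - q.1.2) (p.1 - q.1.1) := by
    have h1 : Continuous fun p : X × Dl X => ((p.2 - q.1.2 : Dl X), (p.1 - q.1.1 : X)) := by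
      fun_prop
    exact isBoundedBilinearMap_apply.continuous.comp h1
  exact isClosed_le continuous_const hc

lemma bidual_subset {A : X → Set (Dl X)} (hrefl : ReflexiveReal X)
    (hlin : IsLinearRelation A) (hclosed : IsClosed (graphOf A)) :
    ∀ x xs, xs ∈ adjointRel (adjointRel A) x → xs ∈ A x := by
  intro x xs hxs
  by_contra hnot
  have hconv : Convex ℝ (graphOf A) := by
    intro p hp q hq a b ha hb hab
    have h1 : a • p.2 ∈ A (a • p.1) := hlin.2.2 a _ _ hp
    have h2 : b • q.2 ∈ A (b • q.1) := hlin.2.2 b _ _ hq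
    have h3 := hlin.2.1 _ _ _ _ h1 h2
    exact h3
  have hnotmem : (x, xs) ∉ graphOf A := hnot
  obtain ⟨Λ, uu, hΛlt, hΛgt⟩ := geometric_hahn_banach_closed_point hconv hclosed hnotmem
  have hzero : ∀ p ∈ graphOf A, Λ p = 0 := by
    intro p hp
    by_contra hne
    have hall : ∀ t : ℝ, t * Λ p < uu := by
      intro t
      have hmem : t • p ∈ graphOf A := by
        have := hlin.2.2 t p.1 p.2 hp
        exact this
      have := hΛlt _ hmem
      rwa [map_smul, smul_eq_mul] at this
    have h1 := hall ((uu + 1) / Λ p)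
    rw [div_mul_cancel₀ _ hne] at h1
    linarith
  have hu0 : 0 < uu := by
    have h0 : (0 : X × Dl X) ∈ graphOf A := hlin.1
    have := hΛlt 0 h0
    simpa using this
  set ys : Dl X := Λ.comp (ContinuousLinearMap.inl ℝ X (Dl X)) with hys
  set Ψ : StrongDual ℝ (Dl X) := Λ.comp (ContinuousLinearMap.inr ℝ X (Dl X)) with hΨ
  obtain ⟨y, hy⟩ := hrefl Ψ
  have hΛdec : ∀ p : X × Dl X, Λ p = ys p.1 + p.2 y := by
    intro p
    have hsplit : p = ((p.1, 0) : X × Dl X) + ((0, p.2) : X × Dl X) := by simp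
    have : Λ p = Λ (p.1, 0) + Λ (0, p.2) := by rw [← map_add]; rw [← hsplit]
    rw [this]
    have e1 : Λ (p.1, 0) = ys p.1 := by rw [hys]; rfl
    have e2 : Λ (0, p.2) = Ψ p.2 := by rw [hΨ]; rfl
    have e3 : Ψ p.2 = p.2 y := by
      rw [← hy]
      exact NormedSpace.dual_def ℝ X y p.2
    rw [e1, e2, e3]
  have hyA : (-ys) ∈ adjointRel A y := by
    intro a as ha
    have h0 := hzero (a, as) ha
    rw [hΛdec] at h0
    simp only [ContinuousLinearMap.neg_apply]
    linarith
  have hxy := hxs y (-ys) hyA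
  have hΛx := hΛgt
  rw [hΛdec (x, xs)] at hΛx
  simp only [ContinuousLinearMap.neg_apply] at hxy
  rw [hxy] at hΛx
  simp at hΛx
  linarith

end Bidual
section Construct

variable {X : Type*} [NormedAddCommGroup X] [NormedSpace ℝ X]

set_option synthInstance.maxHeartbeats 1000000 in
set_option maxHeartbeats 1000000 in
lemma construct_decomp {A : X → Set (Dl X)} (hlin : IsLinearRelation A)
    (hmax : MaxMonotoneOp A) (hdom : domOf A = domOf (adjointRel A)) :
    BWDecomposable A ∧ BWDecomposable (adjointRel A) := by
  classical
  set D : Set X := domOf A with hD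
  -- selections
  set uSel : X → Dl X := fun x => if h : (A x).Nonempty then h.choose else 0 with huSeldef
  have huSel : ∀ x ∈ D, uSel x ∈ A x := by
    intro x hx
    have hx' : (A x).Nonempty := hx
    show (if h : (A x).Nonempty then h.choose else 0) ∈ A x
    rw [dif_pos hx']
    exact hx'.choose_spec
  set vSel : X → Dl X := fun x =>
    if h : (adjointRel A x).Nonempty then h.choose else 0 with hvSeldef
  have hvSel : ∀ x ∈ D, vSel x ∈ adjointRel A x := by
    intro x hx
    have hx' : (adjointRel A x).Nonempty := by
      have : x ∈ domOf (adjointRel A) := hdom ▸ hx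
      exact this
    show (if h : (adjointRel A x).Nonempty then h.choose else 0) ∈ adjointRel A x
    rw [dif_pos hx']
    exact hx'.choose_spec
  have hadjlin : IsLinearRelation (adjointRel A) := adj_linrel A
  -- D is a subspace
  have hD0 : (0 : X) ∈ D := ⟨0, hlin.1⟩
  have hDadd : ∀ {x y : X}, x ∈ D → y ∈ D → x + y ∈ D := by
    intro x y hx hy
    exact ⟨_, hlin.2.1 x (uSel x) y (uSel y) (huSel x hx) (huSel y hy)⟩
  have hDsmul : ∀ (c : ℝ) {x : X}, x ∈ D → c • x ∈ D := by
    intro c x hx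
    exact ⟨_, hlin.2.2 c x (uSel x) (huSel x hx)⟩
  -- perp facts
  have hA0perp : ∀ {z : Dl X}, z ∈ A 0 → ∀ y ∈ D, z y = 0 := by
    intro z hz y hy
    exact monoA0_perp hlin hmax.1 hz hy
  have hAdj0perp : ∀ {z : Dl X}, z ∈ adjointRel A 0 → ∀ y ∈ D, z y = 0 := by
    intro z hz y hy
    exact adj_zero_mem.1 hz y hy
  -- diff facts
  have hAdiff : ∀ {x : X}, x ∈ D → ∀ {u u' : Dl X}, u ∈ A x → u' ∈ A x →
      ∀ y ∈ D, u y = u' y := by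
    intro x _ u u' hu hu' y hy
    have := hA0perp (linrel_sub hlin hu hu') y hy
    simp only [ContinuousLinearMap.sub_apply] at this
    linarith
  have hVdiff : ∀ {x : X}, x ∈ D → ∀ {v v' : Dl X}, v ∈ adjointRel A x →
      v' ∈ adjointRel A x → ∀ y ∈ D, v y = v' y := by
    intro x _ v v' hv hv' y hy
    have := hAdj0perp (linrel_sub hadjlin hv hv') y hy
    simp only [ContinuousLinearMap.sub_apply] at this
    linarith
  -- the submodules
  set Dsub : Submodule ℝ X :=
    { carrier := D
      add_mem' := fun ha hb => hDadd ha hb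
      zero_mem' := hD0
      smul_mem' := fun c _ ha => hDsmul c ha } with hDsubdef
  set P : Submodule ℝ (Dl X) :=
    { carrier := {xs : Dl X | ∀ y ∈ D, xs y = 0}
      add_mem' := by
        intro a b ha hb y hy
        simp [ha y hy, hb y hy]
      zero_mem' := by intro y hy; simp
      smul_mem' := by
        intro c a ha y hy
        simp [ha y hy] } with hPdef
  have hPmem : ∀ {z : Dl X}, z ∈ P ↔ ∀ y ∈ D, z y = 0 := by intro z; rfl
  -- quotient lift
  let φ : Dsub →ₗ[ℝ] (Dl X ⧸ P) :=
    { toFun := fun z => Submodule.Quotient.mk ((2⁻¹ : ℝ) • (uSel z - vSel z))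
      map_add' := by
        intro z w
        rw [← Submodule.Quotient.mk_add, Submodule.Quotient.eq]
        intro y hy
        have hz := z.2
        have hw := w.2
        have hzw : ((z : X) + (w : X)) ∈ D := hDadd hz hw
        have e1 : uSel ((z : X) + w) y = (uSel z + uSel w) y :=
          hAdiff hzw (huSel _ hzw) (hlin.2.1 _ _ _ _ (huSel _ hz) (huSel _ hw)) y hy
        have e2 : vSel ((z : X) + w) y = (vSel z + vSel w) y :=
          hVdiff hzw (hvSel _ hzw) (hadjlin.2.1 _ _ _ _ (hvSel _ hz) (hvSel _ hw)) y hy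
        have ecoe : ((z + w : Dsub) : X) = (z : X) + (w : X) := rfl
        simp only [ecoe, ContinuousLinearMap.sub_apply, ContinuousLinearMap.add_apply,
          ContinuousLinearMap.smul_apply, smul_eq_mul] at e1 e2 ⊢
        linarith
      map_smul' := by
        intro c z
        rw [RingHom.id_apply, ← Submodule.Quotient.mk_smul, Submodule.Quotient.eq]
        intro y hy
        have hz := z.2
        have hcz : (c • (z : X)) ∈ D := hDsmul c hz
        have e1 : uSel (c • (z : X)) y = (c • uSel z) y :=
          hAdiff hcz (huSel _ hcz) (hlin.2.2 c _ _ (huSel _ hz)) y hy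
        have e2 : vSel (c • (z : X)) y = (c • vSel z) y :=
          hVdiff hcz (hvSel _ hcz) (hadjlin.2.2 c _ _ (hvSel _ hz)) y hy
        have ecoe : ((c • z : Dsub) : X) = c • (z : X) := rfl
        simp only [ecoe, ContinuousLinearMap.sub_apply, ContinuousLinearMap.smul_apply,
          smul_eq_mul] at e1 e2 ⊢
        linarith }
  obtain ⟨σlift, hσlift⟩ :=
    Module.projective_lifting_property P.mkQ φ (Submodule.mkQ_surjective P)
  have hσspec : ∀ z : Dsub, ∀ y ∈ D, (σlift z) y = ((2⁻¹ : ℝ) • (uSel z - vSel z)) y := by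
    intro z y hy
    have h1 : P.mkQ (σlift z) = φ z := by rw [← hσlift]; rfl
    rw [Submodule.mkQ_apply] at h1
    have h2 : σlift z - (2⁻¹ : ℝ) • (uSel z - vSel z) ∈ P := (Submodule.Quotient.eq P).1 h1
    have := hPmem.1 h2 y hy
    simp only [ContinuousLinearMap.sub_apply] at this
    linarith
  -- the skew operator
  set σS : X → Dl X := fun x => if h : x ∈ D then σlift ⟨x, h⟩ else 0 with hσSdef
  have hσSval : ∀ x (hx : x ∈ D), σS x = σlift ⟨x, hx⟩ := by
    intro x hx
    show (if h : x ∈ D then σlift ⟨x, h⟩ else 0) = _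
    rw [dif_pos hx]
  have hσSP : ∀ x (hx : x ∈ D), ∀ y ∈ D,
      (σS x) y = 2⁻¹ * (uSel x y - vSel x y) := by
    intro x hx y hy
    rw [hσSval x hx]
    have := hσspec ⟨x, hx⟩ y hy
    simpa [ContinuousLinearMap.smul_apply, ContinuousLinearMap.sub_apply, smul_eq_mul] using this
  have hσSadd : ∀ {x y : X}, x ∈ D → y ∈ D → σS (x + y) = σS x + σS y := by
    intro x y hx hy
    rw [hσSval x hx, hσSval y hy, hσSval (x + y) (hDadd hx hy)]
    have : (⟨x + y, hDadd hx hy⟩ : Dsub) = ⟨x, hx⟩ + ⟨y, hy⟩ := rfl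
    rw [this, map_add]
  have hσSsmul : ∀ (c : ℝ) {x : X}, x ∈ D → σS (c • x) = c • σS x := by
    intro c x hx
    rw [hσSval x hx, hσSval (c • x) (hDsmul c hx)]
    have : (⟨c • x, hDsmul c hx⟩ : Dsub) = c • (⟨x, hx⟩ : Dsub) := rfl
    rw [this, map_smul]
  have hσSzero : σS 0 = 0 := by
    rw [hσSval 0 hD0]
    have : (⟨(0 : X), hD0⟩ : Dsub) = 0 := rfl
    rw [this, map_zero]
  -- adjoint selection identities
  have hvu : ∀ x ∈ D, vSel x x = uSel x x := by
    intro x hx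
    exact adj_id (hvSel x hx) (huSel x hx)
  have hσSskew : ∀ x ∈ D, σS x x = 0 := by
    intro x hx
    rw [hσSP x hx x hx, hvu x hx]
    ring
  -- quadratic function
  set qr : X → ℝ := fun x => 2⁻¹ * (uSel x) x with hqrdef
  have hqval : ∀ x ∈ D, ∀ u ∈ A x, qr x = 2⁻¹ * u x := by
    intro x hx u hu
    have := hAdiff hx (huSel x hx) hu x hx
    show 2⁻¹ * (uSel x) x = 2⁻¹ * u x
    rw [this]
  have hqnn : ∀ x ∈ D, 0 ≤ qr x := by
    intro x hx
    have := mono_self hlin hmax.1 (huSel x hx)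
    have h2 : (0:ℝ) ≤ 2⁻¹ := by norm_num
    exact mul_nonneg h2 this
  set qe : X → EReal := fun x => if x ∈ D then ((qr x : ℝ) : EReal) else ⊤ with hqedef
  have hqeD : ∀ x ∈ D, qe x = ((qr x : ℝ) : EReal) := by
    intro x hx; show (if x ∈ D then _ else _) = _; rw [if_pos hx]
  have hqeT : ∀ x, x ∉ D → qe x = ⊤ := by
    intro x hx; show (if x ∈ D then _ else _) = _; rw [if_neg hx]
  -- minorants and f
  set Minor : Dl X × ℝ → Prop := fun p => ∀ y, ((p.1 y + p.2 : ℝ) : EReal) ≤ qe y with hMinordef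
  set f : X → EReal :=
    fun x => sSup {v : EReal | ∃ p : Dl X × ℝ, Minor p ∧ v = ((p.1 x + p.2 : ℝ) : EReal)}
    with hfdef
  have hf_ge : ∀ p : Dl X × ℝ, Minor p → ∀ x, ((p.1 x + p.2 : ℝ) : EReal) ≤ f x := by
    intro p hp x
    exact le_sSup ⟨p, hp, rfl⟩
  have hf_le_qe : ∀ x, f x ≤ qe x := by
    intro x
    apply sSup_le
    rintro v ⟨p, hp, rfl⟩
    exact hp x
  have hqe_nonneg : ∀ y, (0 : EReal) ≤ qe y := by
    intro y
    by_cases hy : y ∈ D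
    · rw [hqeD y hy]
      exact_mod_cast hqnn y hy
    · rw [hqeT y hy]; exact le_top
  have hMinor0 : Minor (0, 0) := by
    intro y
    simpa using hqe_nonneg y
  have hf_nonneg : ∀ x, (0 : EReal) ≤ f x := by
    intro x
    have := hf_ge (0, 0) hMinor0 x
    simpa using this
  -- central minorant lemma
  have hMINOR : ∀ x (hx : x ∈ D) (xs : Dl X),
      (∀ y ∈ D, xs y = 2⁻¹ * (uSel x y + vSel x y)) → Minor (xs, qr x - xs x) := by
    intro x hx xs hxs y
    by_cases hy : y ∈ D
    · rw [hqeD y hy]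
      show (((xs y + (qr x - xs x) : ℝ)) : EReal) ≤ ((qr y : ℝ) : EReal)
      rw [EReal.coe_le_coe_iff]
      have hmono := hmax.1 (huSel y hy) (huSel x hx)
      simp only [ContinuousLinearMap.sub_apply, map_sub] at hmono
      have hvy : vSel x y = uSel y x := adj_id (hvSel x hx) (huSel y hy)
      have hvx : vSel x x = uSel x x := hvu x hx
      have hxsy := hxs y hy
      have hxsx := hxs x hx
      have hqx : qr x = 2⁻¹ * uSel x x := rfl
      have hqy : qr y = 2⁻¹ * uSel y y := rfl
      rw [hxsy, hxsx, hqx, hqy, hvy, hvx]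
      linarith
    · rw [hqeT y hy]
      exact le_top
  have hfD : ∀ x ∈ D, f x = ((qr x : ℝ) : EReal) := by
    intro x hx
    apply le_antisymm
    · rw [← hqeD x hx]; exact hf_le_qe x
    · set p : Dl X × ℝ := ((2⁻¹ : ℝ) • (uSel x + vSel x),
        qr x - ((2⁻¹ : ℝ) • (uSel x + vSel x)) x) with hpd
      have hm : Minor p := by
        apply hMINOR x hx
        intro y hy
        simp only [ContinuousLinearMap.smul_apply, ContinuousLinearMap.add_apply, smul_eq_mul]
      have := hf_ge p hm x
      have he : (p.1 x + p.2 : ℝ) = qr x := by simp [hpd]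
      rwa [he] at this
  -- subdifferential characterization
  have hsub_char : ∀ x (hx : x ∈ D) (xs : Dl X),
      xs ∈ subdiff f x ↔ ∀ y ∈ D, xs y = 2⁻¹ * (uSel x y + vSel x y) := by
    intro x hx xs
    constructor
    · intro hxs h hh
      set u : Dl X := uSel x
      set v : Dl X := vSel x
      set w : Dl X := uSel h
      set k : ℝ := 2⁻¹ * (w h) with hkdef
      have hk : 0 ≤ k := hqnn h hh
      have hkey : ∀ t : ℝ, t * (xs h) ≤ t * (2⁻¹ * (u h + v h)) + t^2 * k := by
        intro t
        have hmem : x + t • h ∈ D := hDadd hx (hDsmul t hh)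
        have h1 := hxs (x + t • h)
        rw [hfD x hx, hfD _ hmem] at h1
        have he : xs (x + t • h - x) = t * xs h := by
          simp [map_sub, map_add, map_smul]
        rw [he, ← EReal.coe_add, EReal.coe_le_coe_iff] at h1
        have hq2 : qr (x + t • h) = qr x + t * (2⁻¹ * (u h + v h)) + t^2 * k := by
          have hu2 : u + t • w ∈ A (x + t • h) :=
            hlin.2.1 _ _ _ _ (huSel x hx) (hlin.2.2 t h w (huSel h hh))
          have := hqval _ hmem _ hu2
          have hwx : w x = v h := (adj_id (hvSel x hx) (huSel h hh)).symm
          have hqx : qr x = 2⁻¹ * u x := rfl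
          rw [this, hqx, ← hwx]
          simp only [ContinuousLinearMap.add_apply, ContinuousLinearMap.smul_apply, map_add,
            map_smul, smul_eq_mul, hkdef]
          ring
        rw [hq2] at h1
        linarith
      set c : ℝ := xs h - 2⁻¹ * (u h + v h) with hcdef
      have hc : ∀ t : ℝ, t * c ≤ t^2 * k := by
        intro t
        have := hkey t
        simp only [hcdef]
        nlinarith [this]
      have hk1 : (0:ℝ) < k + 1 := by linarith
      have h1 := hc (c / (k + 1))
      have h2 := mul_le_mul_of_nonneg_right h1 (le_of_lt (mul_pos hk1 hk1))
      have e1 : (c / (k+1) * c) * ((k+1) * (k+1)) = c^2 * (k+1) := by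
        field_simp
      have e2 : ((c / (k+1))^2 * k) * ((k+1) * (k+1)) = c^2 * k := by
        rw [div_pow, div_mul_eq_mul_div, div_mul_eq_mul_div, div_eq_iff (by positivity)]
        ring
      rw [e1, e2] at h2
      have hc2 : c^2 = 0 := le_antisymm (by nlinarith) (sq_nonneg c)
      have : c = 0 := by
        have := sq_eq_zero_iff.1 hc2
        exact this
      simp only [hcdef] at this
      linarith
    · intro hxs y
      rw [hfD x hx]
      have he : ((xs (y - x) : ℝ) : EReal) + ((qr x : ℝ) : EReal)
          = ((xs y + (qr x - xs x) : ℝ) : EReal) := by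
        rw [← EReal.coe_add]
        congr 1
        simp only [map_sub]
        ring
      rw [he]
      exact hf_ge (xs, qr x - xs x) (hMINOR x hx xs hxs) y
  -- f is proper
  have hproper : ProperFun f := by
    constructor
    · intro x
      have := hf_nonneg x
      intro hbot
      rw [hbot] at this
      simp at this
    · refine ⟨0, ?_⟩
      have := hf_le_qe 0
      rw [hqeD 0 hD0] at this
      exact ne_top_of_le_ne_top (EReal.coe_ne_top _) this
  -- f is lsc
  have hlsc : LowerSemicontinuous f := by
    intro x c hc
    rw [hfdef] at hc
    obtain ⟨v, ⟨p, hp, rfl⟩, hcv⟩ := lt_sSup_iff.1 hc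
    have hcont : Continuous fun y => ((p.1 y + p.2 : ℝ) : EReal) :=
      continuous_coe_real_ereal.comp (p.1.continuous.add continuous_const)
    have hopen : IsOpen {y : X | c < ((p.1 y + p.2 : ℝ) : EReal)} :=
      isOpen_lt continuous_const hcont
    have hmem : x ∈ {y : X | c < ((p.1 y + p.2 : ℝ) : EReal)} := hcv
    filter_upwards [hopen.mem_nhds hmem] with y hy
    exact lt_of_lt_of_le hy (hf_ge p hp y)
  -- f is convex
  have hconv : ConvexFun f := by
    intro x y a b ha hb hab
    apply sSup_le
    rintro v ⟨p, hp, rfl⟩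
    have he : ((p.1 (a • x + b • y) + p.2 : ℝ) : EReal)
        = (a : EReal) * ((p.1 x + p.2 : ℝ) : EReal) + (b : EReal) * ((p.1 y + p.2 : ℝ) : EReal) := by
      rw [← EReal.coe_mul, ← EReal.coe_mul, ← EReal.coe_add]
      congr 1
      simp only [map_add, map_smul, smul_eq_mul]
      linear_combination (-p.2) * hab
    rw [he]
    apply add_le_add
    · exact mul_le_mul_of_nonneg_left (hf_ge p hp x) (by exact_mod_cast ha)
    · exact mul_le_mul_of_nonneg_left (hf_ge p hp y) (by exact_mod_cast hb)
  -- the skew operators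
  set Sop : X → Set (Dl X) := fun x => if x ∈ D then {σS x} else ∅ with hSopdef
  set Nop : X → Set (Dl X) := fun x => if x ∈ D then {-(σS x)} else ∅ with hNopdef
  have hSopD : ∀ x ∈ D, Sop x = {σS x} := by
    intro x hx; show (if x ∈ D then _ else _) = _; rw [if_pos hx]
  have hSopT : ∀ x, x ∉ D → Sop x = ∅ := by
    intro x hx; show (if x ∈ D then _ else _) = _; rw [if_neg hx]
  have hNopD : ∀ x ∈ D, Nop x = {-(σS x)} := by
    intro x hx; show (if x ∈ D then _ else _) = _; rw [if_pos hx]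
  have hNopT : ∀ x, x ∉ D → Nop x = ∅ := by
    intro x hx; show (if x ∈ D then _ else _) = _; rw [if_neg hx]
  have hSlin : IsLinearRelation Sop := by
    refine ⟨?_, ?_, ?_⟩
    · rw [hSopD 0 hD0, hσSzero]; rfl
    · intro x xs y ys hx hy
      by_cases hxD : x ∈ D
      · by_cases hyD : y ∈ D
        · rw [hSopD x hxD] at hx
          rw [hSopD y hyD] at hy
          rw [hSopD _ (hDadd hxD hyD), hσSadd hxD hyD]
          simp only [Set.mem_singleton_iff] at hx hy ⊢
          rw [hx, hy]
        · rw [hSopT y hyD] at hy; exact absurd hy (Set.notMem_empty _)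
      · rw [hSopT x hxD] at hx; exact absurd hx (Set.notMem_empty _)
    · intro c x xs hx
      by_cases hxD : x ∈ D
      · rw [hSopD x hxD] at hx
        rw [hSopD _ (hDsmul c hxD), hσSsmul c hxD]
        simp only [Set.mem_singleton_iff] at hx ⊢
        rw [hx]
      · rw [hSopT x hxD] at hx; exact absurd hx (Set.notMem_empty _)
  have hNlin : IsLinearRelation Nop := by
    refine ⟨?_, ?_, ?_⟩
    · rw [hNopD 0 hD0, hσSzero]; simp
    · intro x xs y ys hx hy
      by_cases hxD : x ∈ D
      · by_cases hyD : y ∈ D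
        · rw [hNopD x hxD] at hx
          rw [hNopD y hyD] at hy
          rw [hNopD _ (hDadd hxD hyD), hσSadd hxD hyD]
          simp only [Set.mem_singleton_iff] at hx hy ⊢
          rw [hx, hy]; abel
        · rw [hNopT y hyD] at hy; exact absurd hy (Set.notMem_empty _)
      · rw [hNopT x hxD] at hx; exact absurd hx (Set.notMem_empty _)
    · intro c x xs hx
      by_cases hxD : x ∈ D
      · rw [hNopD x hxD] at hx
        rw [hNopD _ (hDsmul c hxD), hσSsmul c hxD]
        simp only [Set.mem_singleton_iff] at hx ⊢
        rw [hx]; simp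
      · rw [hNopT x hxD] at hx; exact absurd hx (Set.notMem_empty _)
  have hSskew : SkewOp Sop := by
    intro x xs hx
    by_cases hxD : x ∈ D
    · rw [hSopD x hxD] at hx
      simp only [Set.mem_singleton_iff] at hx
      rw [hx]
      exact hσSskew x hxD
    · rw [hSopT x hxD] at hx; exact absurd hx (Set.notMem_empty _)
  have hNskew : SkewOp Nop := by
    intro x xs hx
    by_cases hxD : x ∈ D
    · rw [hNopD x hxD] at hx
      simp only [Set.mem_singleton_iff] at hx
      rw [hx]
      simp [hσSskew x hxD]
    · rw [hNopT x hxD] at hx; exact absurd hx (Set.notMem_empty _)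
  have hSsv : AtMostSingleValued Sop := by
    intro x
    by_cases hxD : x ∈ D
    · rw [hSopD x hxD]; exact Set.subsingleton_singleton
    · rw [hSopT x hxD]; exact Set.subsingleton_empty
  have hNsv : AtMostSingleValued Nop := by
    intro x
    by_cases hxD : x ∈ D
    · rw [hNopD x hxD]; exact Set.subsingleton_singleton
    · rw [hNopT x hxD]; exact Set.subsingleton_empty
  -- decomposition of A
  have hdecA : ∀ x, A x = subdiff f x + Sop x := by
    intro x
    by_cases hx : x ∈ D
    · rw [hSopD x hx]
      ext xs
      constructor
      · intro hxs
        rw [Set.mem_add]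
        refine ⟨xs - σS x, ?_, σS x, rfl, by abel⟩
        rw [hsub_char x hx]
        intro y hy
        have e1 : xs y = uSel x y := hAdiff hx hxs (huSel x hx) y hy
        have e2 := hσSP x hx y hy
        simp only [ContinuousLinearMap.sub_apply]
        rw [e1, e2]
        ring
      · intro hxs
        rw [Set.mem_add] at hxs
        obtain ⟨ζ, hζ, s, hs, hsum⟩ := hxs
        simp only [Set.mem_singleton_iff] at hs
        subst hs
        rw [hsub_char x hx] at hζ
        have hz : xs - uSel x ∈ A 0 := by
          apply perp_sub_A0 hlin hmax
          intro y hy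
          have e1 := hζ y hy
          have e2 := hσSP x hx y hy
          simp only [ContinuousLinearMap.sub_apply, ← hsum, ContinuousLinearMap.add_apply]
          rw [e1, e2]
          ring
        have := linrel_add_zero hlin (huSel x hx) hz
        simpa using this
    · have hAe : A x = ∅ := Set.not_nonempty_iff_eq_empty.1 hx
      rw [hAe, hSopT x hx, Set.add_empty]
  -- decomposition of A*
  have hdecAdj : ∀ x, adjointRel A x = subdiff f x + Nop x := by
    intro x
    by_cases hx : x ∈ D
    · rw [hNopD x hx]
      ext xs
      constructor
      · intro hxs
        rw [Set.mem_add]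
        refine ⟨xs + σS x, ?_, -(σS x), rfl, by abel⟩
        rw [hsub_char x hx]
        intro y hy
        have e1 : xs y = vSel x y := hVdiff hx hxs (hvSel x hx) y hy
        have e2 := hσSP x hx y hy
        simp only [ContinuousLinearMap.add_apply]
        rw [e1, e2]
        ring
      · intro hxs
        rw [Set.mem_add] at hxs
        obtain ⟨ζ, hζ, s, hs, hsum⟩ := hxs
        simp only [Set.mem_singleton_iff] at hs
        subst hs
        rw [hsub_char x hx] at hζ
        have hz : xs - vSel x ∈ adjointRel A 0 := by
          apply adj_zero_mem.2
          intro y hy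
          have e1 := hζ y hy
          have e2 := hσSP x hx y hy
          simp only [ContinuousLinearMap.sub_apply, ← hsum, ContinuousLinearMap.add_apply,
            ContinuousLinearMap.neg_apply]
          rw [e1, e2]
          ring
        have := linrel_add_zero hadjlin (hvSel x hx) hz
        simpa using this
    · have hAe : adjointRel A x = ∅ := by
        apply Set.not_nonempty_iff_eq_empty.1
        intro hne
        exact hx (hdom ▸ (hne : x ∈ domOf (adjointRel A)))
      rw [hAe, hNopT x hx, Set.add_empty]
  exact ⟨⟨f, Sop, hproper, hlsc, hconv, hSlin, hSskew, hSsv, hdecA⟩,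
    ⟨f, Nop, hproper, hlsc, hconv, hNlin, hNskew, hNsv, hdecAdj⟩⟩

end Construct

/-- Let `A : X ⇉ X*` be a maximal monotone linear relation.
Then both `A` and `A*` are Borwein–Wiersma decomposable iff `dom A = dom A*`. -/
theorem bw_decomposable_both_iff_dom_eq
    [CompleteSpace X] (hrefl : ReflexiveReal X)
    (A : X → Set (Dl X)) (hlin : IsLinearRelation A) (hmax : MaxMonotoneOp A) :
    (BWDecomposable A ∧ BWDecomposable (adjointRel A)) ↔
      domOf A = domOf (adjointRel A) := by
  constructor
  · rintro ⟨hA, hAdj⟩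
    apply Set.Subset.antisymm
    · exact bw_dom_subset_adj hlin hA
    · intro x hx
      obtain ⟨xs, hxs⟩ := bw_dom_subset_adj (adj_linrel A) hAdj hx
      exact ⟨xs, bidual_subset hrefl hlin (maxmono_graph_closed hmax) x xs hxs⟩
  · intro hdom
    exact construct_decomp hlin hmax hdom

end
end

section
/- Let A : X ⇉ X* be a maximal monotone linear relation such that dom A ⊆ dom A*, and let S be any single-valued linear selection of A∘. Then A = ∂(\overline{q_A}) + S (pointwise Minkowski sum), so this is a Borwein–Wiersma decomposition of A; moreover ∂(\overline{q_A})(x) = A_+x for every x ∈ dom A. -/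
open Pointwise
open scoped Classical

noncomputable section

variable {X : Type*} [NormedAddCommGroup X] [NormedSpace ℝ X]

section Aux

variable {X : Type*} [NormedAddCommGroup X] [NormedSpace ℝ X]

lemma aux_mono_pos {A : X → Set (Dl X)} (hmono : MonotoneOp A) (h0 : (0 : Dl X) ∈ A 0)
    {y : X} {ys : Dl X} (h : ys ∈ A y) : 0 ≤ ys y := by
  have := hmono h h0
  simpa using this

lemma aux_A0_perp {A : X → Set (Dl X)} (hlin : IsLinearRelation A) (hmono : MonotoneOp A)
    {z : Dl X} (hz : z ∈ A 0) {y : X} {ys : Dl X} (hy : ys ∈ A y) : z y = 0 := by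
  by_contra h
  set t : ℝ := (ys y + 1) / (z y) with ht
  have htz : t • z ∈ A 0 := by
    have := hlin.2.2 t 0 z hz
    simpa using this
  have hm := hmono htz hy
  have heq : (t • z - ys) (0 - y) = -(t * z y) + ys y := by
    simp only [ContinuousLinearMap.sub_apply, ContinuousLinearMap.smul_apply, map_sub,
      map_zero, smul_eq_mul]
    ring
  rw [heq] at hm
  have htzy : t * z y = ys y + 1 := by
    rw [ht, div_mul_cancel₀ _ h]
  linarith

lemma aux_Adiff {A : X → Set (Dl X)} (hlin : IsLinearRelation A)
    {x : X} {u v : Dl X} (hu : u ∈ A x) (hv : v ∈ A x) : u - v ∈ A 0 := by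
  have h1 : (-1 : ℝ) • v ∈ A ((-1 : ℝ) • x) := hlin.2.2 (-1) x v hv
  have h2 := hlin.2.1 x u _ _ hu h1
  have hx : x + (-1 : ℝ) • x = (0 : X) := by module
  have hu2 : u + (-1 : ℝ) • v = u - v := by module
  rw [hx, hu2] at h2
  exact h2

lemma aux_qA_eq {A : X → Set (Dl X)} (hlin : IsLinearRelation A) (hmono : MonotoneOp A)
    {x : X} {a : Dl X} (ha : a ∈ A x) :
    qA A x = (((2 : ℝ)⁻¹ * a x : ℝ) : EReal) := by
  have hset : {v : EReal | ∃ xs ∈ A x, v = (((2 : ℝ)⁻¹ * xs x : ℝ) : EReal)} =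
      {(((2 : ℝ)⁻¹ * a x : ℝ) : EReal)} := by
    ext v
    simp only [Set.mem_setOf_eq, Set.mem_singleton_iff]
    constructor
    · rintro ⟨xs, hxs, rfl⟩
      have hd : xs - a ∈ A 0 := aux_Adiff hlin hxs ha
      have hz := aux_A0_perp hlin hmono hd ha
      have hxx : xs x = a x := by
        have : xs x - a x = 0 := by
          simpa [ContinuousLinearMap.sub_apply] using hz
        linarith
      rw [hxx]
    · rintro rfl
      exact ⟨a, ha, rfl⟩
  rw [qA, hset, sInf_singleton]

lemma aux_qA_nonneg {A : X → Set (Dl X)} (hmono : MonotoneOp A) (h0 : (0 : Dl X) ∈ A 0)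
    (y : X) : 0 ≤ qA A y := by
  refine le_sInf ?_
  rintro v ⟨ys, hys, rfl⟩
  have h1 : 0 ≤ ys y := aux_mono_pos hmono h0 hys
  have h2 : (0 : ℝ) ≤ (2 : ℝ)⁻¹ * ys y := by positivity
  exact_mod_cast h2

lemma aux_qA_top {A : X → Set (Dl X)} {y : X} (hy : y ∉ domOf A) : qA A y = ⊤ := by
  have hA : A y = ∅ := Set.not_nonempty_iff_eq_empty.mp hy
  simp [qA, hA]

lemma aux_lscHull_le (f : X → EReal) (x : X) : lscHull f x ≤ f x := by
  refine sSup_le ?_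
  rintro v ⟨g, hg, hle, rfl⟩
  exact hle x

lemma aux_le_lscHull {f g : X → EReal} (hg : LowerSemicontinuous g) (hle : ∀ y, g y ≤ f y)
    (x : X) : g x ≤ lscHull f x :=
  le_sSup ⟨g, hg, hle, rfl⟩

lemma aux_clqA_nonneg {A : X → Set (Dl X)} (hmono : MonotoneOp A) (h0 : (0 : Dl X) ∈ A 0)
    (x : X) : 0 ≤ lscHull (qA A) x :=
  aux_le_lscHull lowerSemicontinuous_const (fun y => aux_qA_nonneg hmono h0 y) x

lemma aux_clqA_zero {A : X → Set (Dl X)} (hlin : IsLinearRelation A) (hmono : MonotoneOp A) :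
    lscHull (qA A) 0 = 0 := by
  refine le_antisymm ?_ (aux_clqA_nonneg hmono hlin.1 0)
  have h1 : qA A 0 = 0 := by
    rw [aux_qA_eq hlin hmono hlin.1]
    norm_num
  calc lscHull (qA A) 0 ≤ qA A 0 := aux_lscHull_le _ _
    _ = 0 := h1

lemma aux_affine_lsc (c : Dl X) (r : ℝ) :
    LowerSemicontinuous (fun y : X => ((c y + r : ℝ) : EReal)) := by
  apply Continuous.lowerSemicontinuous
  exact continuous_coe_real_ereal.comp (c.continuous.add continuous_const)

lemma aux_symPart_subdiff {A : X → Set (Dl X)} (hlin : IsLinearRelation A)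
    (hmono : MonotoneOp A) {x : X} {w : Dl X} (hw : w ∈ symPart A x) :
    w ∈ subdiff (lscHull (qA A)) x := by
  obtain ⟨u', hu', v', hv', rfl⟩ := hw
  obtain ⟨u, hu, rfl⟩ := hu'
  obtain ⟨v, hv, rfl⟩ := hv'
  set W : Dl X := (2 : ℝ)⁻¹ • u + (2 : ℝ)⁻¹ • v with hW
  have hvx : v x = u x := hv x u hu
  set r : ℝ := (2 : ℝ)⁻¹ * u x - W x with hr
  have hmin : ∀ y, ((W y + r : ℝ) : EReal) ≤ qA A y := by
    intro y
    by_cases hy : y ∈ domOf A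
    · obtain ⟨ys, hys⟩ := hy
      rw [aux_qA_eq hlin hmono hys]
      have hvy : v y = ys x := hv y ys hys
      have hmono2 : 0 ≤ (ys - u) (y - x) := hmono hys hu
      have hexp : (ys - u) (y - x) = ys y - ys x - u y + u x := by
        simp only [ContinuousLinearMap.sub_apply, map_sub]
        ring
      rw [hexp] at hmono2
      have hWy : W y = (2 : ℝ)⁻¹ * u y + (2 : ℝ)⁻¹ * ys x := by
        simp only [hW, ContinuousLinearMap.add_apply, ContinuousLinearMap.smul_apply,
          smul_eq_mul, hvy]
      have hWx : W x = (2 : ℝ)⁻¹ * u x + (2 : ℝ)⁻¹ * u x := by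
        simp only [hW, ContinuousLinearMap.add_apply, ContinuousLinearMap.smul_apply,
          smul_eq_mul, hvx]
      have key : W y + r ≤ (2 : ℝ)⁻¹ * ys y := by
        rw [hr, hWy, hWx]; linarith
      exact_mod_cast key
    · rw [aux_qA_top hy]; exact le_top
  intro y
  have h1 : lscHull (qA A) x ≤ (((2 : ℝ)⁻¹ * u x : ℝ) : EReal) := by
    calc lscHull (qA A) x ≤ qA A x := aux_lscHull_le _ _
      _ = (((2 : ℝ)⁻¹ * u x : ℝ) : EReal) := aux_qA_eq hlin hmono hu
  calc (W (y - x) : EReal) + lscHull (qA A) x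
      ≤ (W (y - x) : EReal) + (((2 : ℝ)⁻¹ * u x : ℝ) : EReal) := by
        exact add_le_add_right h1 _
    _ = ((W (y - x) + (2 : ℝ)⁻¹ * u x : ℝ) : EReal) := by
        rw [EReal.coe_add]
    _ = ((W y + r : ℝ) : EReal) := by
        norm_cast
        rw [map_sub, hr]; ring
    _ ≤ lscHull (qA A) y := aux_le_lscHull (aux_affine_lsc W r) hmin y

lemma aux_perp_mem_A0 {A : X → Set (Dl X)} (hmax : MaxMonotoneOp A) (h0 : (0 : Dl X) ∈ A 0)
    {z : Dl X} (hz : ∀ a as, as ∈ A a → z a = 0) : z ∈ A 0 := by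
  apply hmax.2
  intro y ys hys
  have h1 : 0 ≤ ys y := aux_mono_pos hmax.1 h0 hys
  have h2 : z y = 0 := hz y ys hys
  have h3 : (z - ys) (0 - y) = ys y := by
    simp only [ContinuousLinearMap.sub_apply, map_sub, map_zero, h2]
    ring
  rw [h3]; exact h1

lemma aux_adjdiff_A0 {A : X → Set (Dl X)} (hmax : MaxMonotoneOp A) (h0 : (0 : Dl X) ∈ A 0)
    {x : X} {v d : Dl X} (hv : v ∈ adjointRel A x) (hd : d ∈ adjointRel A x) :
    v - d ∈ A 0 := by
  apply aux_perp_mem_A0 hmax h0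
  intro a as has
  have h1 : v a = as x := hv a as has
  have h2 : d a = as x := hd a as has
  simp [ContinuousLinearMap.sub_apply, h1, h2]

lemma aux_A0_add {A : X → Set (Dl X)} (hlin : IsLinearRelation A)
    {x : X} {w z : Dl X} (hw : w ∈ A x) (hz : z ∈ A 0) : w + z ∈ A x := by
  have := hlin.2.1 x w 0 z hw hz
  simpa using this

lemma aux_sum_eq {A : X → Set (Dl X)} (hlin : IsLinearRelation A) (hmax : MaxMonotoneOp A)
    {x : X} {s : Dl X} (hs : s ∈ skewPart A x) :
    symPart A x + ({s} : Set (Dl X)) = A x := by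
  obtain ⟨c', ⟨c, hc, rfl⟩, d', ⟨d, hd, rfl⟩, rfl⟩ := hs
  apply Set.Subset.antisymm
  · rintro p ⟨q, hq, s', hs', rfl⟩
    obtain ⟨u', ⟨u, hu, rfl⟩, v', ⟨v, hv, rfl⟩, rfl⟩ := hq
    rw [Set.mem_singleton_iff] at hs'
    subst hs'
    have h1 : u + c ∈ A (x + x) := hlin.2.1 x u x c hu hc
    have h2 : (2 : ℝ)⁻¹ • (u + c) ∈ A ((2 : ℝ)⁻¹ • (x + x)) := hlin.2.2 _ _ _ h1
    have hx2 : (2 : ℝ)⁻¹ • (x + x) = x := by module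
    rw [hx2] at h2
    have h3 : v - d ∈ A 0 := aux_adjdiff_A0 hmax hlin.1 hv hd
    have h4 : (2 : ℝ)⁻¹ • (v - d) ∈ A ((2 : ℝ)⁻¹ • (0 : X)) := hlin.2.2 _ _ _ h3
    rw [smul_zero] at h4
    have h5 := aux_A0_add hlin h2 h4
    have heq : (2 : ℝ)⁻¹ • (u + c) + (2 : ℝ)⁻¹ • (v - d) =
        (2 : ℝ)⁻¹ • u + (2 : ℝ)⁻¹ • v + ((2 : ℝ)⁻¹ • c - (2 : ℝ)⁻¹ • d) := by module
    rw [heq] at h5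
    exact h5
  · intro w hw
    have hwc : w - c ∈ A 0 := aux_Adiff hlin hw hc
    have hu : (2 : ℝ) • w - c ∈ A x := by
      have := aux_A0_add hlin hw hwc
      have heq : w + (w - c) = (2 : ℝ) • w - c := by module
      rwa [heq] at this
    refine ⟨(2 : ℝ)⁻¹ • ((2 : ℝ) • w - c) + (2 : ℝ)⁻¹ • d,
      ⟨(2 : ℝ)⁻¹ • ((2 : ℝ) • w - c), ⟨_, hu, rfl⟩, (2 : ℝ)⁻¹ • d, ⟨d, hd, rfl⟩, rfl⟩,
      (2 : ℝ)⁻¹ • c - (2 : ℝ)⁻¹ • d, rfl, ?_⟩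
    module

lemma aux_skew_vanish {A : X → Set (Dl X)} {z : X} {w : Dl X} (hw : w ∈ skewPart A z) :
    w z = 0 := by
  obtain ⟨u', ⟨u, hu, rfl⟩, d', ⟨d, hd, rfl⟩, rfl⟩ := hw
  have h1 : d z = u z := hd z u hu
  simp [ContinuousLinearMap.sub_apply, ContinuousLinearMap.smul_apply, smul_eq_mul, h1]

lemma aux_subdiff_finite {A : X → Set (Dl X)} (hlin : IsLinearRelation A)
    (hmono : MonotoneOp A) {x : X} {xs : Dl X}
    (h : xs ∈ subdiff (lscHull (qA A)) x) : ∃ rx : ℝ, lscHull (qA A) x = (rx : EReal) := by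
  have h0 := h 0
  rw [aux_clqA_zero hlin hmono] at h0
  have hnetop : lscHull (qA A) x ≠ ⊤ := by
    intro htop
    rw [htop] at h0
    simp only [EReal.coe_add_top] at h0
    exact absurd h0 (by simp)
  have hnebot : lscHull (qA A) x ≠ ⊥ := by
    intro hbot
    have := aux_clqA_nonneg hmono hlin.1 x
    rw [hbot] at this
    simp at this
  exact ⟨(lscHull (qA A) x).toReal, (EReal.coe_toReal hnetop hnebot).symm⟩

lemma aux_subdiff_mono {A : X → Set (Dl X)} (hlin : IsLinearRelation A)
    (hmono : MonotoneOp A) {x y : X} {xs ys : Dl X}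
    (hx : xs ∈ subdiff (lscHull (qA A)) x) (hy : ys ∈ subdiff (lscHull (qA A)) y) :
    0 ≤ (xs - ys) (x - y) := by
  obtain ⟨rx, hrx⟩ := aux_subdiff_finite hlin hmono hx
  obtain ⟨ry, hry⟩ := aux_subdiff_finite hlin hmono hy
  have h1 := hx y
  have h2 := hy x
  rw [hrx, hry] at h1 h2
  have h1' : xs (y - x) + rx ≤ ry := by exact_mod_cast h1
  have h2' : ys (x - y) + ry ≤ rx := by exact_mod_cast h2
  have e1 : xs (y - x) = xs y - xs x := map_sub _ _ _
  have e2 : ys (x - y) = ys x - ys y := map_sub _ _ _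
  have e3 : (xs - ys) (x - y) = xs x - xs y - ys x + ys y := by
    simp only [ContinuousLinearMap.sub_apply, map_sub]; ring
  rw [e3]; rw [e1] at h1'; rw [e2] at h2'
  linarith

end Aux

/-- Let `A : X ⇉ X*` be a maximal monotone linear relation with
`dom A ⊆ dom A*`, and let `S` be any single-valued linear selection of `A∘`.
Then `A = ∂(cl q_A) + S`, and `∂(cl q_A) x = A₊ x` on `dom A`. -/
theorem bw_decomposition_via_qA
    [CompleteSpace X] (hrefl : ReflexiveReal X)
    (A S : X → Set (Dl X)) (hlin : IsLinearRelation A) (hmax : MaxMonotoneOp A)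
    (hdom : domOf A ⊆ domOf (adjointRel A))
    (hS : IsLinearSelection S (skewPart A)) :
    (∀ x, A x = subdiff (lscHull (qA A)) x + S x) ∧
    (∀ x ∈ domOf A, subdiff (lscHull (qA A)) x = symPart A x) := by
  have hmono := hmax.1
  obtain ⟨hSlin, hSsingle, hSdom, hSsub⟩ := hS
  have hSex : ∀ x ∈ domOf A, ∃ s, s ∈ S x := by
    intro x hx
    obtain ⟨a, ha⟩ := hx
    obtain ⟨b, hb⟩ := hdom ⟨a, ha⟩
    have hskew : (skewPart A x).Nonempty :=
      ⟨(2 : ℝ)⁻¹ • a - (2 : ℝ)⁻¹ • b, ⟨_, ⟨a, ha, rfl⟩, _, ⟨b, hb, rfl⟩, rfl⟩⟩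
    have hmem : x ∈ domOf S := by rw [hSdom]; exact hskew
    exact hmem
  have hsym_sub : ∀ x, symPart A x ⊆ subdiff (lscHull (qA A)) x := fun x w hw =>
    aux_symPart_subdiff hlin hmono hw
  have hsum : ∀ x ∈ domOf A, symPart A x + S x = A x := by
    intro x hx
    obtain ⟨s, hs⟩ := hSex x hx
    have hSx : S x = {s} := (hSsingle x).eq_singleton_of_mem hs
    rw [hSx]
    exact aux_sum_eq hlin hmax (hSsub x hs)
  have hA_sub : ∀ x, A x ⊆ subdiff (lscHull (qA A)) x + S x := by
    intro x
    by_cases hx : x ∈ domOf A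
    · rw [← hsum x hx]
      exact Set.add_subset_add_right (hsym_sub x)
    · rw [Set.not_nonempty_iff_eq_empty.mp hx]
      exact Set.empty_subset _
  have hSdiff : ∀ {x y : X} {sx sy : Dl X}, sx ∈ S x → sy ∈ S y →
      (sx - sy) (x - y) = 0 := by
    intro x y sx sy hsx hsy
    have h1 : (-1 : ℝ) • sy ∈ S ((-1 : ℝ) • y) := hSlin.2.2 _ _ _ hsy
    have h2 := hSlin.2.1 x sx _ _ hsx h1
    have hxy : x + (-1 : ℝ) • y = x - y := by module
    have hs2 : sx + (-1 : ℝ) • sy = sx - sy := by module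
    rw [hxy, hs2] at h2
    exact aux_skew_vanish (hSsub _ h2)
  have hT_sub : ∀ x, subdiff (lscHull (qA A)) x + S x ⊆ A x := by
    intro x p hp
    obtain ⟨xs, hxs, sx, hsx, rfl⟩ := hp
    apply hmax.2
    intro y ys hys
    obtain ⟨yss, hyss, sy, hsy, hysplit⟩ := hA_sub y hys
    have hm1 : 0 ≤ (xs - yss) (x - y) := aux_subdiff_mono hlin hmono hxs hyss
    have hm2 : (sx - sy) (x - y) = 0 := hSdiff hsx hsy
    have hexp : (xs + sx - ys) (x - y) = (xs - yss) (x - y) + (sx - sy) (x - y) := by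
      rw [← hysplit]
      simp only [ContinuousLinearMap.sub_apply, ContinuousLinearMap.add_apply]
      ring
    rw [hexp, hm2]
    linarith
  constructor
  · intro x
    exact Set.Subset.antisymm (hA_sub x) (hT_sub x)
  · intro x hx
    refine Set.Subset.antisymm ?_ (hsym_sub x)
    intro xs hxs
    obtain ⟨s, hs⟩ := hSex x hx
    have hmem : xs + s ∈ A x := hT_sub x ⟨xs, hxs, s, hs, rfl⟩
    rw [← hsum x hx] at hmem
    obtain ⟨w, hw, s', hs', heq⟩ := hmem
    have hss : s' = s := hSsingle x hs' hs
    subst hss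
    have hxw : w = xs := add_right_cancel heq
    rw [← hxw]
    exact hw

end
end

section
/- Let A : X ⇉ X* be a maximal monotone linear relation, and suppose A = ∂f₁ + S₁ = ∂f₂ + S₂ (pointwise Minkowski sums) are two Borwein–Wiersma decompositions of A, with f₁, f₂ proper lower semicontinuous convex and S₁, S₂ at most single-valued skew linear relations. Then for every x ∈ dom A: ∂f₁(x) = ∂f₂(x), S₁x ∈ A∘x, and S₂x ∈ A∘x; that is, the subdifferential part is unique on dom A and each skew part is a selection of A∘ on dom A. -/
open Pointwise
open scoped Classical

noncomputable section

variable {X : Type*} [NormedAddCommGroup X] [NormedSpace ℝ X]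

/-- A real function with an affine "subgradient" has exact trapezoid increments. -/
lemma bw_key (g : ℝ → ℝ) (α β : ℝ)
    (h : ∀ s t : ℝ, (s - t) * ((1 - t) * α + t * β) ≤ g s - g t) :
    g 1 - g 0 = (α + β) / 2 := by
  set d := β - α with hd
  set ψ : ℝ → ℝ := fun t => g t - (t * α + t ^ 2 * d / 2) with hψ
  have hb : ∀ s t : ℝ, |ψ s - ψ t| ≤ (s - t) ^ 2 * |d| / 2 := by
    intro s t
    have h1 := h s t
    have h2 := h t s
    rw [abs_le]
    constructor <;> simp only [hψ] <;>
      nlinarith [le_abs_self d, neg_abs_le d, sq_nonneg (s - t),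
        mul_nonneg (sq_nonneg (s - t)) (sub_nonneg.2 (le_abs_self d)),
        mul_nonneg (sq_nonneg (s - t)) (sub_nonneg.2 (neg_abs_le d))]
  have hnn : ∀ n : ℕ, 0 < n → |ψ 1 - ψ 0| ≤ |d| / (2 * n) := by
    intro n hn
    have hn' : (0 : ℝ) < n := by exact_mod_cast hn
    have htel : ψ 1 - ψ 0 = ∑ k ∈ Finset.range n, (ψ ((k + 1 : ℕ) / n) - ψ ((k : ℕ) / n)) := by
      rw [Finset.sum_range_sub (f := fun k : ℕ => ψ ((k : ℝ) / n))]
      norm_num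
      rw [div_self (ne_of_gt hn')]
    rw [htel]
    calc |∑ k ∈ Finset.range n, (ψ ((k + 1 : ℕ) / n) - ψ ((k : ℕ) / n))|
        ≤ ∑ k ∈ Finset.range n, |ψ ((k + 1 : ℕ) / n) - ψ ((k : ℕ) / n)| :=
          Finset.abs_sum_le_sum_abs _ _
      _ ≤ ∑ _k ∈ Finset.range n, |d| / (2 * n ^ 2) := by
          apply Finset.sum_le_sum
          intro k _
          have := hb ((k + 1 : ℕ) / n) ((k : ℕ) / n)
          have he : ((k + 1 : ℕ) / n - (k : ℕ) / n : ℝ) = 1 / n := by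
            field_simp
            push_cast; ring
          rw [he] at this
          calc |ψ ((k + 1 : ℕ) / n) - ψ ((k : ℕ) / n)| ≤ (1 / n) ^ 2 * |d| / 2 := this
            _ = |d| / (2 * n ^ 2) := by
                rw [div_pow, one_pow, div_mul_eq_mul_div, one_mul, div_div, mul_comm]
      _ = |d| / (2 * n) := by
          rw [Finset.sum_const, Finset.card_range, nsmul_eq_mul]
          field_simp
  have hzero : ψ 1 - ψ 0 = 0 := by
    by_contra h0
    have hpos : 0 < |ψ 1 - ψ 0| := abs_pos.2 (sub_ne_zero.2 fun he => h0 (by rw [he]; ring))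
    obtain ⟨n, hnn'⟩ := exists_nat_gt (|d| / (2 * |ψ 1 - ψ 0|))
    have hn0 : 0 < n := by
      by_contra hc
      push_neg at hc
      interval_cases n
      simp only [Nat.cast_zero] at hnn'
      exact absurd hnn' (not_lt.2 (by positivity))
    have := hnn n hn0
    have hn' : (0 : ℝ) < n := by exact_mod_cast hn0
    have : |ψ 1 - ψ 0| ≤ |d| / (2 * n) := this
    have hlt : |d| / (2 * n) < |ψ 1 - ψ 0| := by
      rw [div_lt_iff₀ (by positivity)]
      rw [div_lt_iff₀ (by positivity)] at hnn'
      nlinarith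
    linarith
  simp only [hψ] at hzero
  rw [hd] at hzero
  nlinarith [hzero]

/-- If the subdifferential is nonempty at `x` and `f` is proper, then `f x` is finite. -/
lemma bw_finite {f : X → EReal} (hfp : ProperFun f) {x : X} {u : Dl X}
    (hu : u ∈ subdiff f x) : f x = ((f x).toReal : EReal) := by
  have hb := hfp.1 x
  have ht : f x ≠ ⊤ := by
    intro h
    obtain ⟨y0, hy0⟩ := hfp.2
    have h2 := hu y0
    rw [h, EReal.coe_add_top] at h2
    exact hy0 (top_le_iff.1 h2)
  exact (EReal.coe_toReal ht hb).symm

/-- Extraction from the Minkowski-sum decomposition. -/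
lemma bw_split {A : X → Set (Dl X)} {f : X → EReal} {S : X → Set (Dl X)}
    (hSsv : AtMostSingleValued S)
    (hdec : ∀ x, A x = subdiff f x + S x)
    {x : X} {ax s : Dl X} (hax : ax ∈ A x) (hs : s ∈ S x) :
    ax - s ∈ subdiff f x := by
  have h := hax
  rw [hdec x, Set.mem_add] at h
  obtain ⟨u, hu, s', hs', huv⟩ := h
  have hss : s' = s := hSsv x hs' hs
  have hu' : u = ax - s := by rw [← hss, ← huv]; abel
  rwa [hu'] at hu

/-- Exact trapezoidal formula for increments of `f` along `dom A`. -/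
lemma bw_incr {A : X → Set (Dl X)} (hlin : IsLinearRelation A)
    {f : X → EReal} {S : X → Set (Dl X)}
    (hfp : ProperFun f) (hS : IsLinearRelation S) (hSsv : AtMostSingleValued S)
    (hdec : ∀ x, A x = subdiff f x + S x)
    {x y : X} {ax ay sx sy : Dl X}
    (hax : ax ∈ A x) (hay : ay ∈ A y) (hsx : sx ∈ S x) (hsy : sy ∈ S y) :
    (f y).toReal - (f x).toReal
      = ((ax (y - x) - sx (y - x)) + (ay (y - x) - sy (y - x))) / 2 := by
  set z : ℝ → X := fun t => (1 - t) • x + t • y with hz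
  set az : ℝ → Dl X := fun t => (1 - t) • ax + t • ay with haz
  set sz : ℝ → Dl X := fun t => (1 - t) • sx + t • sy with hsz
  have hazm : ∀ t, az t ∈ A (z t) := fun t =>
    hlin.2.1 _ _ _ _ (hlin.2.2 (1 - t) _ _ hax) (hlin.2.2 t _ _ hay)
  have hszm : ∀ t, sz t ∈ S (z t) := fun t =>
    hS.2.1 _ _ _ _ (hS.2.2 (1 - t) _ _ hsx) (hS.2.2 t _ _ hsy)
  have hsub : ∀ t, az t - sz t ∈ subdiff f (z t) := fun t =>
    bw_split hSsv hdec (hazm t) (hszm t)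
  have hfin : ∀ t, f (z t) = (((f (z t)).toReal : ℝ) : EReal) := fun t =>
    bw_finite hfp (hsub t)
  set g : ℝ → ℝ := fun t => (f (z t)).toReal with hg
  have hzdiff : ∀ s t : ℝ, z s - z t = (s - t) • (y - x) := by
    intro s t
    simp only [hz]
    module
  have hφ : ∀ t : ℝ, (az t - sz t) (y - x)
      = (1 - t) * (ax (y - x) - sx (y - x)) + t * (ay (y - x) - sy (y - x)) := by
    intro t
    simp only [haz, hsz, ContinuousLinearMap.sub_apply, ContinuousLinearMap.add_apply,
      ContinuousLinearMap.smul_apply, smul_eq_mul]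
    ring
  have hkey : ∀ s t : ℝ, (s - t) * ((1 - t) * (ax (y - x) - sx (y - x))
      + t * (ay (y - x) - sy (y - x))) ≤ g s - g t := by
    intro s t
    have h2 := hsub t (z s)
    rw [hfin t, hfin s, hzdiff s t, map_smul, smul_eq_mul, hφ t] at h2
    rw [← EReal.coe_add] at h2
    have := EReal.coe_le_coe_iff.1 h2
    simp only [hg]
    linarith
  have := bw_key g _ _ hkey
  have hz1 : z 1 = y := by simp [hz]
  have hz0 : z 0 = x := by simp [hz]
  simp only [hg, hz1, hz0] at this
  linarith

/-- The skew selection formula: `⟨Sx, y⟩ = ½(⟨ax, y⟩ − ⟨ay, x⟩)` on `dom A`. -/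
lemma bw_sel {A : X → Set (Dl X)} (hlin : IsLinearRelation A)
    {f : X → EReal} {S : X → Set (Dl X)}
    (hfp : ProperFun f) (hS : IsLinearRelation S) (hSs : SkewOp S)
    (hSsv : AtMostSingleValued S)
    (hdec : ∀ x, A x = subdiff f x + S x)
    {x y : X} {ax ay sx : Dl X}
    (hax : ax ∈ A x) (hay : ay ∈ A y) (hsx : sx ∈ S x) :
    sx y = (ax y - ay x) / 2 := by
  -- get an element of S y
  have hSy : ∃ sy, sy ∈ S y := by
    have h := hay
    rw [hdec y, Set.mem_add] at h
    obtain ⟨u, -, sy, hsy, -⟩ := h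
    exact ⟨sy, hsy⟩
  obtain ⟨sy, hsy⟩ := hSy
  have F1 := bw_incr hlin hfp hS hSsv hdec hax hay hsx hsy
  have F2 := bw_incr hlin hfp hS hSsv hdec hlin.1 hax hS.1 hsx
  have F3 := bw_incr hlin hfp hS hSsv hdec hlin.1 hay hS.1 hsy
  have hsxx : sx x = 0 := hSs _ _ hsx
  have hsyy : sy y = 0 := hSs _ _ hsy
  have hanti : sx y + sy x = 0 := by
    have hmem : sx + sy ∈ S (x + y) := hS.2.1 _ _ _ _ hsx hsy
    have h0 := hSs _ _ hmem
    simp only [ContinuousLinearMap.add_apply, map_add] at h0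
    linarith
  simp only [map_sub, sub_zero, ContinuousLinearMap.zero_apply] at F1 F2 F3
  linarith

/-- uniqueness of the subdifferential part.  If a maximal monotone
linear relation `A` has two Borwein–Wiersma decompositions `∂f₁ + S₁ = ∂f₂ + S₂`,
then on `dom A` the subdifferential parts coincide and each skew part is a
selection of `A∘`. -/
theorem bw_decomposition_uniqueness
    [CompleteSpace X] (hrefl : ReflexiveReal X)
    (A : X → Set (Dl X)) (hlin : IsLinearRelation A) (hmax : MaxMonotoneOp A)
    (f₁ f₂ : X → EReal) (S₁ S₂ : X → Set (Dl X))
    (hf₁p : ProperFun f₁) (hf₁l : LowerSemicontinuous f₁) (hf₁c : ConvexFun f₁)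
    (hf₂p : ProperFun f₂) (hf₂l : LowerSemicontinuous f₂) (hf₂c : ConvexFun f₂)
    (hS₁ : IsLinearRelation S₁) (hS₁s : SkewOp S₁) (hS₁sv : AtMostSingleValued S₁)
    (hS₂ : IsLinearRelation S₂) (hS₂s : SkewOp S₂) (hS₂sv : AtMostSingleValued S₂)
    (hdec₁ : ∀ x, A x = subdiff f₁ x + S₁ x)
    (hdec₂ : ∀ x, A x = subdiff f₂ x + S₂ x) :
    ∀ x ∈ domOf A,
      subdiff f₁ x = subdiff f₂ x ∧ S₁ x ⊆ skewPart A x ∧ S₂ x ⊆ skewPart A x := by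
  intro x hx
  obtain ⟨ax, hax⟩ := hx
  -- extract the skew selections at x
  have h1 := hax; rw [hdec₁ x, Set.mem_add] at h1
  obtain ⟨u₁, hu₁, s₁, hs₁, he₁⟩ := h1
  have h2 := hax; rw [hdec₂ x, Set.mem_add] at h2
  obtain ⟨u₂, hu₂, s₂, hs₂, he₂⟩ := h2
  -- the difference of the skew selections annihilates dom A
  have hdiff : ∀ y (ys : Dl X), ys ∈ A y → (s₁ - s₂) y = 0 := by
    intro y ys hys
    have e1 := bw_sel hlin hf₁p hS₁ hS₁s hS₁sv hdec₁ hax hys hs₁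
    have e2 := bw_sel hlin hf₂p hS₂ hS₂s hS₂sv hdec₂ hax hys hs₂
    simp only [ContinuousLinearMap.sub_apply]
    linarith
  -- hence it belongs to A 0, by maximality
  have hz : s₁ - s₂ ∈ A 0 := by
    apply hmax.2
    intro y ys hys
    have h0 := hmax.1 hys hlin.1
    have hd := hdiff y ys hys
    simp only [zero_sub, sub_zero] at h0 ⊢
    simp only [map_neg, ContinuousLinearMap.sub_apply] at *
    linarith
  have hzneg : -(s₁ - s₂) ∈ A 0 := by
    have := hlin.2.2 (-1) 0 (s₁ - s₂) hz
    have he : (-1 : ℝ) • (s₁ - s₂) = -(s₁ - s₂) := by ext v; simp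
    rwa [smul_zero, he] at this
  -- Part 1 : equality of subdifferentials
  have hpart1 : subdiff f₁ x = subdiff f₂ x := by
    ext u
    constructor
    · intro hu
      have hm : u + s₁ ∈ A x := by rw [hdec₁ x]; exact Set.add_mem_add hu hs₁
      have hm2 : (u + s₁) + -(s₁ - s₂) ∈ A (x + 0) := hlin.2.1 _ _ _ _ hm hzneg
      rw [add_zero] at hm2
      have hm3 : u + s₂ ∈ A x := by
        have he : (u + s₁) + -(s₁ - s₂) = u + s₂ := by abel
        rwa [he] at hm2
      rw [hdec₂ x, Set.mem_add] at hm3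
      obtain ⟨v, hv, s', hs', hvs⟩ := hm3
      have hss : s' = s₂ := hS₂sv x hs' hs₂
      rw [hss] at hvs
      have : v = u := by
        have := add_right_cancel hvs
        exact this
      rwa [this] at hv
    · intro hu
      have hm : u + s₂ ∈ A x := by rw [hdec₂ x]; exact Set.add_mem_add hu hs₂
      have hm2 : (u + s₂) + (s₁ - s₂) ∈ A (x + 0) := hlin.2.1 _ _ _ _ hm hz
      rw [add_zero] at hm2
      have hm3 : u + s₁ ∈ A x := by
        have he : (u + s₂) + (s₁ - s₂) = u + s₁ := by abel
        rwa [he] at hm2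
      rw [hdec₁ x, Set.mem_add] at hm3
      obtain ⟨v, hv, s', hs', hvs⟩ := hm3
      have hss : s' = s₁ := hS₁sv x hs' hs₁
      rw [hss] at hvs
      have : v = u := add_right_cancel hvs
      rwa [this] at hv
  refine ⟨hpart1, ?_, ?_⟩
  · -- S₁ x ⊆ skewPart A x
    intro s hs
    have hss : s = s₁ := hS₁sv x hs hs₁
    subst hss
    set b : Dl X := ax - (2 : ℝ) • s with hb
    have hbmem : b ∈ adjointRel A x := by
      intro a as has
      have := bw_sel hlin hf₁p hS₁ hS₁s hS₁sv hdec₁ hax has hs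
      simp only [hb, ContinuousLinearMap.sub_apply, ContinuousLinearMap.smul_apply,
        smul_eq_mul]
      linarith
    have hrepr : s = (2 : ℝ)⁻¹ • ax - (2 : ℝ)⁻¹ • b := by
      simp only [hb]
      module
    rw [hrepr]
    exact Set.sub_mem_sub (Set.smul_mem_smul_set hax) (Set.smul_mem_smul_set hbmem)
  · intro s hs
    have hss : s = s₂ := hS₂sv x hs hs₂
    subst hss
    set b : Dl X := ax - (2 : ℝ) • s with hb
    have hbmem : b ∈ adjointRel A x := by
      intro a as has
      have := bw_sel hlin hf₂p hS₂ hS₂s hS₂sv hdec₂ hax has hs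
      simp only [hb, ContinuousLinearMap.sub_apply, ContinuousLinearMap.smul_apply,
        smul_eq_mul]
      linarith
    have hrepr : s = (2 : ℝ)⁻¹ • ax - (2 : ℝ)⁻¹ • b := by
      simp only [hb]
      module
    rw [hrepr]
    exact Set.sub_mem_sub (Set.smul_mem_smul_set hax) (Set.smul_mem_smul_set hbmem)

end
end

section
/- Let A : X ⇉ X* be a maximal monotone linear relation that is Borwein–Wiersma decomposable via A = ∂f + S, with f proper lower semicontinuous convex and S an at most single-valued skew linear relation. Then there exists a constant α ∈ ℝ such that: (i) f(x) = \overline{q_A}(x) + α for every x ∈ dom A; and (ii) if dom A is closed, then f(x) = \overline{q_A}(x) + α = q_A(x) + α for every x ∈ X. -/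
open Pointwise
open scoped Classical

noncomputable section

variable {X : Type*} [NormedAddCommGroup X] [NormedSpace ℝ X]

private lemma aux_sum_bound (χ : ℝ → ℝ) (c : ℝ) (hc : 0 ≤ c)
    (key : ∀ t r : ℝ, |χ r - χ t| ≤ c * (r - t)^2 / 2) : χ 1 = χ 0 := by
  have hn : ∀ n : ℕ, 0 < n → |χ 1 - χ 0| ≤ c / (2 * n) := by
    intro n hn
    have hn' : (n : ℝ) ≠ 0 := Nat.cast_ne_zero.mpr hn.ne'
    have htel : χ 1 - χ 0 =
        ∑ i ∈ Finset.range n, (χ (((i : ℕ) + 1 : ℕ) / n) - χ ((i : ℕ) / n)) := by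
      rw [Finset.sum_range_sub (fun i => χ ((i : ℝ) / n))]
      norm_num [div_self hn']
    rw [htel]
    calc |∑ i ∈ Finset.range n, (χ (((i : ℕ) + 1 : ℕ) / n) - χ ((i : ℕ) / n))|
        ≤ ∑ i ∈ Finset.range n, |χ (((i : ℕ) + 1 : ℕ) / n) - χ ((i : ℕ) / n)| :=
          Finset.abs_sum_le_sum_abs _ _
      _ ≤ ∑ _i ∈ Finset.range n, c / (2 * n ^ 2) := by
          apply Finset.sum_le_sum
          intro i _
          have := key ((i : ℝ) / n) (((i : ℕ) + 1 : ℕ) / n)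
          have harg : (((i : ℕ) + 1 : ℕ) : ℝ) / n - (i : ℝ) / n = 1 / n := by
            push_cast; field_simp; ring
          rw [harg] at this
          calc |χ (((i : ℕ) + 1 : ℕ) / n) - χ ((i : ℕ) / n)| ≤ c * (1 / n) ^ 2 / 2 := this
            _ = c / (2 * n ^ 2) := by ring
      _ = n * (c / (2 * n ^ 2)) := by rw [Finset.sum_const, Finset.card_range]; ring
      _ = c / (2 * n) := by field_simp
  by_contra hne
  have hd : 0 < |χ 1 - χ 0| := abs_pos.mpr (sub_ne_zero.mpr hne)
  obtain ⟨n, hngt⟩ := exists_nat_gt (c / (2 * |χ 1 - χ 0|))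
  have hpos : 0 < n + 1 := Nat.succ_pos n
  have h1 := hn (n + 1) hpos
  have hlt : (c / (2 * |χ 1 - χ 0|)) < (n + 1 : ℝ) := by
    have : (n : ℝ) < n + 1 := by linarith
    push_cast; linarith
  have hnpos : (0 : ℝ) < n + 1 := by positivity
  rw [div_lt_iff₀ (by positivity)] at hlt
  have h2 : c / (2 * ((n : ℝ) + 1)) < |χ 1 - χ 0| := by
    rw [div_lt_iff₀ (by positivity)]
    nlinarith
  push_cast at h1
  linarith

private lemma quad_identity (c : ℝ) (hc : 0 ≤ c) (ψ : ℝ → ℝ)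
    (h : ∀ t r : ℝ, (r - t) * (t * c) + ψ t ≤ ψ r) : ψ 1 = ψ 0 + c / 2 := by
  have key : ∀ t r : ℝ, |(ψ r - c * r ^ 2 / 2) - (ψ t - c * t ^ 2 / 2)| ≤ c * (r - t) ^ 2 / 2 := by
    intro t r
    have h1 := h t r
    have h2 := h r t
    rw [abs_le]
    constructor <;> nlinarith
  have := aux_sum_bound (fun t => ψ t - c * t ^ 2 / 2) c hc key
  nlinarith [this]

private lemma lsc_add_const {X : Type*} [TopologicalSpace X] {f : X → EReal}
    (hf : LowerSemicontinuous f) (c : ℝ) :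
    LowerSemicontinuous (fun x => f x + (c : EReal)) := by
  have hcont : Continuous (fun y : EReal => y + (c : EReal)) := by
    rw [continuous_iff_continuousAt]
    intro y
    have h := EReal.continuousAt_add (p := (y, (c : EReal)))
      (Or.inr (by simp)) (Or.inr (by simp))
    have h2 : ContinuousAt (fun z : EReal => (z, (c : EReal))) y :=
      (continuous_id.prodMk continuous_const).continuousAt
    exact ContinuousAt.comp (x := y) (f := fun z : EReal => (z, (c : EReal)))
      (g := fun p : EReal × EReal => p.1 + p.2) h h2
  have hmono : Monotone (fun y : EReal => y + (c : EReal)) :=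
    fun a b hab => add_le_add hab le_rfl
  exact hcont.comp_lowerSemicontinuous hf hmono

/-- If a maximal monotone linear relation `A` is Borwein–Wiersma
decomposable via `A = ∂f + S`, then there is `α ∈ ℝ` with `f = cl q_A + α` on
`dom A`; if moreover `dom A` is closed then `f = cl q_A + α = q_A + α` on `X`. -/
theorem bw_subdifferential_part_eq_qA_plus_const
    [CompleteSpace X] (hrefl : ReflexiveReal X)
    (A : X → Set (Dl X)) (hlin : IsLinearRelation A) (hmax : MaxMonotoneOp A)
    (f : X → EReal) (S : X → Set (Dl X))
    (hfp : ProperFun f) (hfl : LowerSemicontinuous f) (hfc : ConvexFun f)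
    (hS : IsLinearRelation S) (hSs : SkewOp S) (hSsv : AtMostSingleValued S)
    (hdec : ∀ x, A x = subdiff f x + S x) :
    ∃ α : ℝ,
      (∀ x ∈ domOf A, f x = lscHull (qA A) x + (α : EReal)) ∧
      (IsClosed (domOf A) →
        ∀ x, f x = lscHull (qA A) x + (α : EReal) ∧ lscHull (qA A) x = qA A x) := by
  classical
  obtain ⟨hA0, hAadd, hAsmul⟩ := hlin
  have hmono := hmax.1
  -- both parts nonempty on the domain
  have hdomS : ∀ x, (A x).Nonempty → (subdiff f x).Nonempty ∧ (S x).Nonempty := by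
    intro x hx
    rw [hdec x] at hx
    obtain ⟨a, ha⟩ := hx
    rw [Set.mem_add] at ha
    obtain ⟨u, hu, w, hw, _⟩ := ha
    exact ⟨⟨u, hu⟩, ⟨w, hw⟩⟩
  have hftop : ∀ x, (subdiff f x).Nonempty → f x ≠ ⊤ := by
    rintro x ⟨u, hu⟩ hfx
    obtain ⟨y, hy⟩ := hfp.2
    have h1 := hu y
    rw [hfx, EReal.coe_add_top] at h1
    exact hy (top_le_iff.mp h1)
  have h0dom : (A 0).Nonempty := ⟨0, hA0⟩
  have hf0top : f 0 ≠ ⊤ := hftop 0 (hdomS 0 h0dom).1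
  set α := (f 0).toReal with hα
  have hf0 : f 0 = (α : EReal) := (EReal.coe_toReal hf0top (hfp.1 0)).symm
  have hpos : ∀ x xs, xs ∈ A x → 0 ≤ xs x := by
    intro x xs hxs
    have h1 := hmono hxs hA0
    simpa using h1
  -- the key identity : f x = ½⟨x, x*⟩ + α for every (x, x*) ∈ gra A
  have main : ∀ x, ∀ xs ∈ A x, f x = (((2 : ℝ)⁻¹ * xs x + α : ℝ) : EReal) := by
    intro x xs hxs
    set c := xs x with hc
    have hc0 : 0 ≤ c := hpos x xs hxs
    have hsub : ∀ t : ℝ, ∃ u ∈ subdiff f (t • x),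
        ∀ r : ℝ, u ((r - t) • x) = (r - t) * (t * c) := by
      intro t
      have htx : (t • xs) ∈ A (t • x) := hAsmul t x xs hxs
      rw [hdec (t • x), Set.mem_add] at htx
      obtain ⟨u, hu, w, hw, huw⟩ := htx
      refine ⟨u, hu, ?_⟩
      have hwx : w x = 0 := by
        rcases eq_or_ne t 0 with h0 | h0
        · subst h0
          rw [zero_smul] at hw
          have hw0 : w = 0 := hSsv 0 hw hS.1
          simp [hw0]
        · have h1 := hSs (t • x) w hw
          rw [map_smul, smul_eq_mul] at h1
          exact (mul_eq_zero.mp h1).resolve_left h0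
      intro r
      have hueq : u = t • xs - w := by
        rw [← huw]; abel
      rw [hueq]
      simp only [ContinuousLinearMap.sub_apply, ContinuousLinearMap.smul_apply,
        map_smul, smul_eq_mul, hwx, ← hc]
      ring
    have hdomt : ∀ t : ℝ, f (t • x) ≠ ⊤ := by
      intro t
      obtain ⟨u, hu, -⟩ := hsub t
      exact hftop _ ⟨u, hu⟩
    set ψ : ℝ → ℝ := fun t => (f (t • x)).toReal with hψ
    have hfeq : ∀ t : ℝ, f (t • x) = ((ψ t : ℝ) : EReal) := fun t =>
      (EReal.coe_toReal (hdomt t) (hfp.1 _)).symm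
    have hineq : ∀ t r : ℝ, (r - t) * (t * c) + ψ t ≤ ψ r := by
      intro t r
      obtain ⟨u, hu, hval⟩ := hsub t
      have h1 := hu (r • x)
      have hsm : r • x - t • x = (r - t) • x := by rw [sub_smul]
      rw [hsm, hval r, hfeq t, hfeq r, ← EReal.coe_add] at h1
      exact_mod_cast h1
    have hquad := quad_identity c hc0 ψ hineq
    have h1x : (1 : ℝ) • x = x := one_smul ℝ x
    have hψ0 : ψ 0 = α := by
      simp only [hψ]
      rw [zero_smul, ← hα]
    have hfx : f x = ((ψ 0 + c / 2 : ℝ) : EReal) := by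
      rw [← h1x, hfeq 1, hquad]
    rw [hfx, hψ0]
    norm_cast
    ring
  -- value of qA on dom A
  have hqA : ∀ x, (A x).Nonempty → qA A x = (((f x).toReal - α : ℝ) : EReal) := by
    rintro x ⟨xs, hxs⟩
    have hset : {v : EReal | ∃ ys ∈ A x, v = (((2 : ℝ)⁻¹ * ys x : ℝ) : EReal)}
        = {(((f x).toReal - α : ℝ) : EReal)} := by
      ext v
      simp only [Set.mem_setOf_eq, Set.mem_singleton_iff]
      constructor
      · rintro ⟨ys, hys, rfl⟩
        have h1 := main x ys hys
        have h2 : (f x).toReal = (2 : ℝ)⁻¹ * ys x + α := by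
          rw [h1, EReal.toReal_coe]
        rw [h2]
        norm_cast
        ring
      · rintro rfl
        refine ⟨xs, hxs, ?_⟩
        have h1 := main x xs hxs
        have h2 : (f x).toReal = (2 : ℝ)⁻¹ * xs x + α := by
          rw [h1, EReal.toReal_coe]
        rw [h2]
        norm_cast
        ring
    rw [qA, hset, sInf_singleton]
  have hqA_top : ∀ x, ¬ (A x).Nonempty → qA A x = ⊤ := by
    intro x hx
    have hset : {v : EReal | ∃ ys ∈ A x, v = (((2 : ℝ)⁻¹ * ys x : ℝ) : EReal)}
        = (∅ : Set EReal) := by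
      ext v
      simp only [Set.mem_setOf_eq, Set.mem_empty_iff_false, iff_false]
      rintro ⟨ys, hys, -⟩
      exact hx ⟨ys, hys⟩
    rw [qA, hset, sInf_empty]
  -- f - α is an lsc minorant of qA
  have hg0le : ∀ y, f y + ((-α : ℝ) : EReal) ≤ qA A y := by
    intro y
    by_cases hy : (A y).Nonempty
    · rw [hqA y hy]
      have hfy : f y = (((f y).toReal : ℝ) : EReal) :=
        (EReal.coe_toReal (hftop y (hdomS y hy).1) (hfp.1 y)).symm
      conv_lhs => rw [hfy]
      rw [← EReal.coe_add]
      exact le_of_eq (EReal.coe_eq_coe_iff.mpr (by ring))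
    · rw [hqA_top y hy]; exact le_top
  have hlsc_ge : ∀ y, f y + ((-α : ℝ) : EReal) ≤ lscHull (qA A) y := by
    intro y
    apply le_sSup
    exact ⟨fun z => f z + ((-α : ℝ) : EReal), lsc_add_const hfl (-α), hg0le, rfl⟩
  have hlsc_le : ∀ y, lscHull (qA A) y ≤ qA A y := by
    intro y
    apply sSup_le
    rintro v ⟨g, -, hg, rfl⟩
    exact hg y
  -- part (i)
  have parti : ∀ x ∈ domOf A,
      f x = lscHull (qA A) x + (α : EReal) ∧ lscHull (qA A) x = qA A x := by
    intro x hx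
    have hxne : (A x).Nonempty := hx
    have hfx : f x = (((f x).toReal : ℝ) : EReal) :=
      (EReal.coe_toReal (hftop x (hdomS x hxne).1) (hfp.1 x)).symm
    have h1 : lscHull (qA A) x = qA A x := by
      refine le_antisymm (hlsc_le x) ?_
      rw [hqA x hxne]
      calc (((f x).toReal - α : ℝ) : EReal) = f x + ((-α : ℝ) : EReal) := by
            conv_rhs => rw [hfx]
            rw [← EReal.coe_add]
            exact EReal.coe_eq_coe_iff.mpr (by ring)
        _ ≤ lscHull (qA A) x := hlsc_ge x
    refine ⟨?_, h1⟩
    rw [h1, hqA x hxne]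
    conv_lhs => rw [hfx]
    rw [← EReal.coe_add]
    exact EReal.coe_eq_coe_iff.mpr (by ring)
  refine ⟨α, fun x hx => (parti x hx).1, ?_⟩
  -- part (ii)
  intro hcl x
  by_cases hx : x ∈ domOf A
  · exact ⟨(parti x hx).1, (parti x hx).2⟩
  · -- separate x from the closed subspace dom A
    have hadd_mem : ∀ a b : X, a ∈ domOf A → b ∈ domOf A → a + b ∈ domOf A := by
      rintro a b ⟨as, has⟩ ⟨bs, hbs⟩
      exact ⟨as + bs, hAadd a as b bs has hbs⟩
    have hsmul_mem : ∀ (c : ℝ) (a : X), a ∈ domOf A → c • a ∈ domOf A := by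
      rintro c a ⟨as, has⟩
      exact ⟨c • as, hAsmul c a as has⟩
    have hconv : Convex ℝ (domOf A) := by
      intro a ha b hb s t hs ht _
      exact hadd_mem _ _ (hsmul_mem s a ha) (hsmul_mem t b hb)
    obtain ⟨φ0, u, hu1, hu2⟩ := geometric_hahn_banach_closed_point hconv hcl hx
    have hzero : ∀ y ∈ domOf A, φ0 y = 0 := by
      intro y hy
      by_contra hne
      have hty : ((|u| + 1) / (φ0 y)) • y ∈ domOf A := hsmul_mem _ y hy
      have h1 := hu1 _ hty
      rw [map_smul, smul_eq_mul, div_mul_cancel₀ _ hne] at h1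
      have h2 : u ≤ |u| := le_abs_self u
      linarith
    have hupos : 0 < u := by
      have h1 := hu1 0 h0dom
      simpa using h1
    have hφx : 0 < φ0 x := lt_trans hupos hu2
    set φ : Dl X := (φ0 x)⁻¹ • φ0 with hφdef
    have hφ1 : φ x = 1 := by
      simp only [hφdef, ContinuousLinearMap.smul_apply, smul_eq_mul]
      exact inv_mul_cancel₀ (ne_of_gt hφx)
    have hφ0 : ∀ y ∈ domOf A, φ y = 0 := by
      intro y hy
      simp only [hφdef, ContinuousLinearMap.smul_apply, smul_eq_mul, hzero y hy, mul_zero]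
    -- by maximality, t • φ ∈ A 0 for all t
    have hmem : ∀ t : ℝ, t • φ ∈ A 0 := by
      intro t
      apply hmax.2
      intro y ys hys
      have hy : y ∈ domOf A := ⟨ys, hys⟩
      have h1 : (t • φ - ys) (0 - y) = -(t * φ y) + ys y := by
        simp only [ContinuousLinearMap.sub_apply, ContinuousLinearMap.smul_apply, zero_sub,
          map_neg, smul_eq_mul]
        ring
      rw [h1, hφ0 y hy, mul_zero, neg_zero, zero_add]
      exact hpos y ys hys
    have hsubφ : ∀ t : ℝ, (t • φ) ∈ subdiff f 0 := by
      intro t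
      have h1 := hmem t
      rw [hdec 0, Set.mem_add] at h1
      obtain ⟨v, hv, w, hw, hvw⟩ := h1
      have hw0 : w = 0 := hSsv 0 hw hS.1
      rw [hw0, add_zero] at hvw
      rwa [← hvw]
    have hftopx : f x = ⊤ := by
      by_contra hne
      obtain ⟨M, hM⟩ : ∃ M : ℝ, f x = (M : EReal) := by
        refine ⟨(f x).toReal, (EReal.coe_toReal hne (hfp.1 x)).symm⟩
      have h1 := hsubφ (M - α + 1) x
      rw [sub_zero, hf0, hM] at h1
      have happ : ((M - α + 1) • φ) x = M - α + 1 := by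
        simp only [ContinuousLinearMap.smul_apply, smul_eq_mul, hφ1, mul_one]
      rw [happ, ← EReal.coe_add] at h1
      have h2 : M - α + 1 + α ≤ M := EReal.coe_le_coe_iff.mp h1
      linarith
    have hq : qA A x = ⊤ := hqA_top x hx
    have hlsc : lscHull (qA A) x = ⊤ := by
      apply top_le_iff.mp
      calc (⊤ : EReal) = f x + ((-α : ℝ) : EReal) := by
            rw [hftopx, EReal.top_add_coe]
        _ ≤ lscHull (qA A) x := hlsc_ge x
    constructor
    · rw [hftopx, hlsc, EReal.top_add_coe]
    · rw [hlsc, hq]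


end
end
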